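/- arXiv:0806.2011 — 9 statements merged into one kernel-verified Lean document; each statement's English description precedes it below -/
import Mathlib

section
/- One has s_0 = s_1 = ⋯ = s_n = 0; if μ ≥ n+2 then s_{n+1} = μ / (max_{1≤i≤n} w_i); and s_k + s_{μ+n−k} = μ for every k with n+1 ≤ k ≤ μ−1. -/
/-!
A sequence that is nondecreasing on `[0, μ)` is the sorted enumeration of its multiset of values.
Each block `{ℓμ/wᵢ : ℓ < wᵢ}` contributes one `0`, and its other points are positive, so `s`
consists of `n + 1` zeros followed by the sorted list of the positive points `T`. The least
element of `T` is `μ / max wᵢ`, and `T` is invariant under `x ↦ μ - x` (via `ℓ ↦ wᵢ - ℓ`); for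
a sorted list this invariance says that its `j`-th entry and its `j`-th entry from the end add
up to `μ`.
-/

open Finset

section SortedEnumeration

variable {α : Type*} [LinearOrder α]

theorem map_range_eq_of_monotoneOn {s : ℕ → α} {m : ℕ} {l : List α}
    (hs : MonotoneOn s (Set.Iio m)) (hl : l.Pairwise (· ≤ ·))
    (h : (Multiset.range m).map s = l) : (List.range m).map s = l := by
  refine List.Perm.eq_of_pairwise' ?_ hl (Multiset.coe_eq_coe.mp h)
  rw [List.pairwise_map]
  exact List.pairwise_lt_range.imp_of_mem fun ha hb hab =>
    hs (List.mem_range.mp ha) (List.mem_range.mp hb) hab.le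

theorem MonotoneOn.map_range_eq_replicate_append_sort {s : ℕ → α} {m k : ℕ} {a : α}
    {T : Multiset α} (hs : MonotoneOn s (Set.Iio m)) (ha : ∀ x ∈ T, a ≤ x)
    (h : (Multiset.range m).map s = Multiset.replicate k a + T) :
    (List.range m).map s = List.replicate k a ++ T.sort := by
  refine map_range_eq_of_monotoneOn hs ?_ ?_
  · refine List.pairwise_append.mpr ⟨List.pairwise_replicate.mpr (Or.inr le_rfl),
      T.pairwise_sort _, fun b hb x hx => ?_⟩
    rw [List.eq_of_mem_replicate hb]
    exact ha x ((Multiset.mem_sort _).mp hx)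
  · rw [h, ← Multiset.coe_add, ← Multiset.coe_replicate, Multiset.sort_eq]

theorem MonotoneOn.apply_of_lt_of_map_range_eq_replicate_add {s : ℕ → α} {m k : ℕ} {a : α}
    {T : Multiset α} (hs : MonotoneOn s (Set.Iio m)) (ha : ∀ x ∈ T, a ≤ x)
    (h : (Multiset.range m).map s = Multiset.replicate k a + T) {i : ℕ} (hi : i < k) :
    s i = a := by
  have hm : m = k + Multiset.card T := by simpa using congrArg Multiset.card h
  have := List.getElem_of_eq (hs.map_range_eq_replicate_append_sort ha h) (i := i)
    (by simp; omega)
  simpa [List.getElem_append_left, hi] using this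

theorem MonotoneOn.apply_add_of_map_range_eq_replicate_add {s : ℕ → α} {m k : ℕ} {a : α}
    {T : Multiset α} (hs : MonotoneOn s (Set.Iio m)) (ha : ∀ x ∈ T, a ≤ x)
    (h : (Multiset.range m).map s = Multiset.replicate k a + T) {j : ℕ}
    (hj : j < Multiset.card T) : s (k + j) = T.sort[j]'(by simpa) := by
  have hm : m = k + Multiset.card T := by simpa using congrArg Multiset.card h
  have := List.getElem_of_eq (hs.map_range_eq_replicate_append_sort ha h) (i := k + j)
    (by simp; omega)
  simpa [List.getElem_append_right] using this

theorem List.Pairwise.getElem_zero_eq_of_forall_le {l : List α} (hl : l.Pairwise (· ≤ ·))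
    {x : α} (hx : x ∈ l) (hmin : ∀ y ∈ l, x ≤ y) : l[0]'(List.length_pos_of_mem hx) = x := by
  cases l with
  | nil => simp at hx
  | cons a t =>
    rcases List.mem_cons.mp hx with rfl | hxt
    · rfl
    · exact le_antisymm (List.rel_of_pairwise_cons hl hxt) (hmin a List.mem_cons_self)

end SortedEnumeration

theorem Multiset.getElem_sort_add_getElem_sort_rev {α : Type*} [AddCommGroup α] [LinearOrder α]
    [IsOrderedAddMonoid α] {M : Multiset α} {c : α} (hM : M.map (c - ·) = M) {j : ℕ}
    (hj : j < card M) :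
    M.sort[j]'(by simpa) + M.sort[card M - 1 - j]'(by simp; omega) = c := by
  have hrev : M.sort.reverse.map (c - ·) = M.sort := by
    refine List.Perm.eq_of_pairwise' ?_ (M.pairwise_sort _) ?_
    · rw [List.pairwise_map, List.pairwise_reverse]
      exact (M.pairwise_sort _).imp fun h => sub_le_sub_left h c
    · rw [← Multiset.coe_eq_coe, ← Multiset.map_coe, Multiset.coe_reverse, Multiset.sort_eq, hM]
  have := List.getElem_of_eq hrev.symm (i := j) (by simpa)
  simp only [List.getElem_map, List.getElem_reverse, Multiset.length_sort] at this
  rw [this]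
  abel

theorem Multiset.range_eq_cons_Ico_one {w : ℕ} (hw : w ≠ 0) :
    Multiset.range w = 0 ::ₘ Multiset.Ico 1 w := by
  rw [Multiset.Nodup.ext (Multiset.nodup_range w)
    (Multiset.nodup_cons.2 ⟨by simp, Multiset.nodup_Ico⟩)]
  intro a
  simp only [Multiset.mem_range, Multiset.mem_cons, Multiset.mem_Ico]
  omega

theorem Multiset.map_const_sub_Ico_one (w : ℕ) :
    (Multiset.Ico 1 w).map (w - ·) = Multiset.Ico 1 w := by
  rcases Nat.eq_zero_or_pos w with rfl | hw
  · simp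
  rw [Multiset.Ico, ← Finset.image_val_of_injOn, Nat.Ico_image_const_sub_eq_Ico hw]
  · simp
  · intro a ha b hb h
    simp only [Finset.coe_Ico, Set.mem_Ico] at ha hb h
    omega

theorem Finset.two_le_sup_of_card_lt_sum {ι : Type*} {S : Finset ι} {w : ι → ℕ}
    (h : #S < ∑ i ∈ S, w i) : 2 ≤ S.sup w := by
  by_contra! hW
  have : ∑ i ∈ S, w i ≤ #S • 1 :=
    Finset.sum_le_card_nsmul S w 1 fun i hi => Nat.le_of_lt_succ ((le_sup hi).trans_lt hW)
  simp only [smul_eq_mul, mul_one] at this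
  omega

/-- For `c = μ` and `w = wᵢ`, the block `{ℓμ/wᵢ : ℓ < wᵢ}` of `S_w` without its `0`. -/
def interiorPoints (c : ℚ) (w : ℕ) : Multiset ℚ :=
  (Multiset.Ico 1 w).map fun ℓ : ℕ => (ℓ : ℚ) * c / w

section InteriorPoints

variable {c : ℚ} {w : ℕ}

theorem mem_interiorPoints {x : ℚ} :
    x ∈ interiorPoints c w ↔ ∃ ℓ, 1 ≤ ℓ ∧ ℓ < w ∧ (ℓ : ℚ) * c / w = x := by
  simp [interiorPoints, and_assoc]

theorem map_range_eq_cons_interiorPoints (hw : w ≠ 0) :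
    (Multiset.range w).map (fun ℓ : ℕ => (ℓ : ℚ) * c / w) = 0 ::ₘ interiorPoints c w := by
  rw [Multiset.range_eq_cons_Ico_one hw, Multiset.map_cons, interiorPoints]
  simp

theorem nonneg_of_mem_interiorPoints (hc : 0 ≤ c) {x : ℚ} (hx : x ∈ interiorPoints c w) :
    0 ≤ x := by
  obtain ⟨ℓ, -, -, rfl⟩ := mem_interiorPoints.mp hx
  positivity

theorem div_le_of_mem_interiorPoints (hc : 0 ≤ c) {W : ℕ} (hwW : w ≤ W) {x : ℚ}
    (hx : x ∈ interiorPoints c w) : c / W ≤ x := by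
  obtain ⟨ℓ, hℓ, hℓw, rfl⟩ := mem_interiorPoints.mp hx
  have hw : (0 : ℚ) < w := by exact_mod_cast (show 0 < w by omega)
  calc c / W = 1 * c / W := by ring
    _ ≤ ℓ * c / w := by gcongr; exact_mod_cast ‹_›

theorem div_mem_interiorPoints (hw : 2 ≤ w) : c / w ∈ interiorPoints c w :=
  mem_interiorPoints.mpr ⟨1, le_rfl, hw, by ring⟩

theorem map_sub_interiorPoints : (interiorPoints c w).map (c - ·) = interiorPoints c w := by
  conv_rhs => rw [interiorPoints, ← Multiset.map_const_sub_Ico_one]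
  rw [interiorPoints, Multiset.map_map, Multiset.map_map]
  refine Multiset.map_congr rfl fun ℓ hℓ => ?_
  obtain ⟨hℓ, hℓw⟩ := Multiset.mem_Ico.mp hℓ
  have hw : (w : ℚ) ≠ 0 := by exact_mod_cast (show w ≠ 0 by omega)
  simp only [Function.comp_apply, Nat.cast_sub hℓw.le]
  field_simp

end InteriorPoints

section WeightedPoints

variable {ι : Type*} {m : Multiset ι} {c : ℚ} {w : ι → ℕ}

theorem bind_map_range_eq_replicate_add (hw : ∀ i ∈ m, w i ≠ 0) :
    (m.bind fun i => (Multiset.range (w i)).map fun ℓ : ℕ => (ℓ : ℚ) * c / w i) =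
      Multiset.replicate (Multiset.card m) 0 + m.bind fun i => interiorPoints c (w i) := by
  rw [Multiset.bind_congr fun i hi => map_range_eq_cons_interiorPoints (hw i hi),
    Multiset.bind_cons, Multiset.map_const']

theorem nonneg_of_mem_bind_interiorPoints (hc : 0 ≤ c) {x : ℚ}
    (hx : x ∈ m.bind fun i => interiorPoints c (w i)) : 0 ≤ x := by
  obtain ⟨i, -, hx⟩ := Multiset.mem_bind.mp hx
  exact nonneg_of_mem_interiorPoints hc hx

theorem map_sub_bind_interiorPoints :
    (m.bind fun i => interiorPoints c (w i)).map (c - ·) =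
      m.bind fun i => interiorPoints c (w i) := by
  rw [Multiset.map_bind]
  exact Multiset.bind_congr fun _ _ => map_sub_interiorPoints

theorem getElem_zero_sort_bind_interiorPoints (hc : 0 ≤ c) {W : ℕ} (hW : 2 ≤ W)
    (hmem : ∃ i ∈ m, w i = W) (hmax : ∀ i ∈ m, w i ≤ W) :
    (m.bind fun i => interiorPoints c (w i)).sort[0]'(by
      obtain ⟨i₀, hi₀, rfl⟩ := hmem
      simpa using Multiset.card_pos_iff_exists_mem.mpr
        ⟨_, Multiset.mem_bind.mpr ⟨i₀, hi₀, div_mem_interiorPoints hW⟩⟩) = c / W := by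
  obtain ⟨i₀, hi₀, rfl⟩ := hmem
  refine (Multiset.pairwise_sort _ _).getElem_zero_eq_of_forall_le ?_ fun y hy => ?_
  · exact (Multiset.mem_sort _).mpr (Multiset.mem_bind.mpr ⟨i₀, hi₀, div_mem_interiorPoints hW⟩)
  · obtain ⟨i, hi, hy⟩ := Multiset.mem_bind.mp ((Multiset.mem_sort _).mp hy)
    exact div_le_of_mem_interiorPoints hc (hmax i hi) hy

end WeightedPoints

theorem stmt_0_general (n : ℕ) (w : ℕ → ℕ) (hw0 : w 0 = 1)
    (hwpos : ∀ i ∈ Finset.Icc 1 n, 1 ≤ w i)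
    (μ : ℕ) (hμ : μ = 1 + ∑ i ∈ Finset.Icc 1 n, w i)
    (s : ℕ → ℚ) (hmono : ∀ k, k + 1 < μ → s k ≤ s (k + 1))
    (hmult : (Multiset.range μ).map s =
      (Finset.range (n + 1)).val.bind fun i =>
        (Multiset.range (w i)).map fun ℓ => (ℓ : ℚ) * μ / (w i)) :
    (∀ k ≤ n, s k = 0) ∧
    (n + 2 ≤ μ → s (n + 1) = (μ : ℚ) / (((Finset.Icc 1 n).sup w : ℕ) : ℚ)) ∧
    (∀ k, n + 1 ≤ k → k ≤ μ - 1 → s k + s (μ + n - k) = μ) := by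
  have hw : ∀ i ∈ (range (n + 1)).val, w i ≠ 0 := by
    rintro (_ | i) hi
    · simp [hw0]
    · exact Nat.one_le_iff_ne_zero.mp (hwpos _ (by simp at hi ⊢; omega))
  set T := (range (n + 1)).val.bind fun i => interiorPoints μ (w i)
  have hvalues : (Multiset.range μ).map s = Multiset.replicate (n + 1) 0 + T := by
    -- `hmult` elaborates `ℓ` as a rational, coercing `Multiset.range (w i)` by a monadic bind.
    simp only [bind_pure_comp, Multiset.fmap_def, Multiset.map_map, Function.comp_def] at hmult
    rw [hmult, bind_map_range_eq_replicate_add hw, card_val, card_range]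
  have hs : MonotoneOn s (Set.Iio μ) := monotoneOn_of_le_succ Set.ordConnected_Iio
    fun k _ _ hk => hmono k (by simpa using hk)
  have hT : ∀ x ∈ T, 0 ≤ x := fun _ => nonneg_of_mem_bind_interiorPoints (Nat.cast_nonneg μ)
  have hcard : μ = n + 1 + Multiset.card T := by
    simpa [add_right_comm] using congrArg Multiset.card hvalues
  refine ⟨fun k hk => hs.apply_of_lt_of_map_range_eq_replicate_add hT hvalues (by omega),
    fun hμn => ?_, fun k hk hkμ => ?_⟩
  · have hW : 2 ≤ (Icc 1 n).sup w := two_le_sup_of_card_lt_sum (by simp; omega)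
    obtain ⟨i₀, hi₀, hWi₀⟩ := exists_mem_eq_sup (Icc 1 n)
      (nonempty_of_ne_empty fun h => by simp [h] at hW) w
    rw [← add_zero (n + 1), hs.apply_add_of_map_range_eq_replicate_add hT hvalues (by omega)]
    refine getElem_zero_sort_bind_interiorPoints (Nat.cast_nonneg μ) hW
      ⟨i₀, mem_range.mpr (Nat.lt_succ_of_le (mem_Icc.mp hi₀).2), hWi₀.symm⟩ fun i hi => ?_
    rcases i with _ | i
    · omega
    · exact le_sup (mem_Icc.mpr ⟨by omega, Nat.lt_succ_iff.mp (mem_range.mp hi)⟩)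
  · obtain ⟨j, rfl⟩ : ∃ j, k = n + 1 + j := ⟨k - (n + 1), by omega⟩
    rw [show μ + n - (n + 1 + j) = n + 1 + (Multiset.card T - 1 - j) by omega,
      hs.apply_add_of_map_range_eq_replicate_add hT hvalues (by omega),
      hs.apply_add_of_map_range_eq_replicate_add hT hvalues (by omega)]
    exact Multiset.getElem_sort_add_getElem_sort_rev (M := T) map_sub_bind_interiorPoints (by omega)

/-- `s₀ = ⋯ = sₙ = 0`; if `μ ≥ n+2` then `s_{n+1} = μ / max_{1≤i≤n} w_i`;
and `s_k + s_{μ+n−k} = μ` for `n+1 ≤ k ≤ μ−1`. -/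
theorem stmt_0 (n : ℕ) (hn : 1 ≤ n) (w : ℕ → ℕ) (hw0 : w 0 = 1)
    (hwpos : ∀ i ∈ Finset.Icc 1 n, 1 ≤ w i)
    (μ : ℕ) (hμ : μ = 1 + ∑ i ∈ Finset.Icc 1 n, w i)
    (s : ℕ → ℚ) (hmono : ∀ k, k + 1 < μ → s k ≤ s (k + 1))
    (hmult : (Multiset.range μ).map s =
      (Finset.range (n + 1)).val.bind fun i =>
        (Multiset.range (w i)).map fun ℓ => (ℓ : ℚ) * μ / (w i)) :
    (∀ k ≤ n, s k = 0) ∧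
    (n + 2 ≤ μ → s (n + 1) = (μ : ℚ) / (((Finset.Icc 1 n).sup w : ℕ) : ℚ)) ∧
    (∀ k, n + 1 ≤ k → k ≤ μ - 1 → s k + s (μ + n - k) = μ) :=
  stmt_0_general n w hw0 hwpos μ hμ s hmono hmult
end

section
/- One has α_k = k for 0 ≤ k ≤ n; α_{k+1} ≤ α_k + 1 for all 0 ≤ k ≤ μ−2; α_k + α_{μ+n−k} = n for every k with n+1 ≤ k ≤ μ−1; and α_k + α_{n−k} = n for every k with 0 ≤ k ≤ n. -/
/-!
Besides the `n + 1` zeros coming from `ℓ = 0`, the multiset `S_w` consists of the points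
`ℓ μ / w_i` with `0 < ℓ < w_i`; they lie in `(0, μ)` and form a multiset invariant under
`x ↦ μ - x`. Hence `s_0 = ⋯ = s_n = 0`, and `k ↦ μ - s_{μ+n-k}` (for `k > n`) is another
nondecreasing enumeration of `S_w`. A sorted enumeration of a multiset is unique, so
`s_k + s_{μ+n-k} = μ` for `n < k < μ`; the claims on `α_k = k - s_k` follow by arithmetic.
-/

theorem Multiset.map_range_sub (m : ℕ) : (Multiset.range m).map (m - 1 - ·) = Multiset.range m := by
  calc (Multiset.range m).map (m - 1 - ·) = ((List.range m).reverse : Multiset ℕ) := by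
        rw [List.range_eq_range', List.reverse_range', zero_add, ← Multiset.map_coe,
          Multiset.coe_range]
    _ = Multiset.range m := Multiset.coe_reverse _

theorem eqOn_of_monotoneOn_of_map_range_eq {α : Type*} [LinearOrder α] {m : ℕ} {a b : ℕ → α}
    (ha : MonotoneOn a (Set.Iio m)) (hb : MonotoneOn b (Set.Iio m))
    (h : (Multiset.range m).map a = (Multiset.range m).map b) : Set.EqOn a b (Set.Iio m) := by
  have sorted : ∀ f : ℕ → α, MonotoneOn f (Set.Iio m) →
      ((List.range m).map f).Pairwise (· ≤ ·) := fun f hf =>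
    List.pairwise_map.2 <| List.pairwise_lt_range.imp_of_mem fun hi hj hij =>
      hf (List.mem_range.1 hi) (List.mem_range.1 hj) hij.le
  have hperm : (List.range m).map a = (List.range m).map b := by
    refine List.Perm.eq_of_pairwise' (sorted a ha) (sorted b hb) (Multiset.coe_eq_coe.1 ?_)
    simpa only [← Multiset.map_coe, Multiset.coe_range] using h
  intro k hk
  have := List.getElem_of_eq hperm (i := k) (by simpa using hk)
  simpa only [List.getElem_map, List.getElem_range] using this

theorem le_of_map_range_eq_replicate_add {α : Type*} {m p : ℕ} {s : ℕ → α}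
    {T : Multiset α} {a : α} (hS : (Multiset.range m).map s = Multiset.replicate p a + T) :
    p ≤ m := by
  have := congrArg Multiset.card hS
  simp only [Multiset.card_map, Multiset.card_range, Multiset.card_add,
    Multiset.card_replicate] at this
  omega

section SortedPoints

variable {α : Type*} [LinearOrder α] {m p : ℕ} {s : ℕ → α} {T : Multiset α}

theorem eq_zero_of_map_range_eq_replicate_add [Zero α] (hs : MonotoneOn s (Set.Iio m))
    (hS : (Multiset.range m).map s = Multiset.replicate p 0 + T) (hT : ∀ x ∈ T, 0 < x)
    {k : ℕ} (hk : k < p) : s k = 0 := by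
  have hpm : p ≤ m := le_of_map_range_eq_replicate_add hS
  have hnonneg : ∀ j < m, 0 ≤ s j := by
    intro j hj
    have : s j ∈ Multiset.replicate p 0 + T := hS ▸ Multiset.mem_map_of_mem s (by simpa using hj)
    rcases Multiset.mem_add.1 this with h | h
    · exact (Multiset.eq_of_mem_replicate h).ge
    · exact (hT _ h).le
  by_contra hne
  have hpos : 0 < s k := (hnonneg k (by omega)).lt_of_ne' hne
  -- zeros of `s` can only occur before index `k`, yet `s` takes the value `0` exactly `p` times
  have hzeros : (Multiset.range m).filter (fun j => 0 = s j) ≤ Multiset.range k := by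
    refine (Multiset.le_iff_subset (Multiset.Nodup.filter _ (Multiset.nodup_range m))).2 ?_
    intro j hj
    obtain ⟨hjm, hj0⟩ := Multiset.mem_filter.1 hj
    rw [Multiset.mem_range] at hjm ⊢
    by_contra hkj
    exact (hpos.trans_le (hs (by simp; omega) (by simpa using hjm) (by omega))).ne' hj0.symm
  have hcount := congrArg (Multiset.count 0) hS
  rw [Multiset.count_map, Multiset.count_add, Multiset.count_replicate_self,
    Multiset.count_eq_zero.2 fun h => (hT 0 h).false] at hcount
  have := Multiset.card_le_card hzeros
  simp only [Multiset.card_range] at this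
  omega

theorem add_apply_reflect_eq_of_map_range_eq_replicate_add [AddCommGroup α]
    [IsOrderedAddMonoid α] {c : α} (hs : MonotoneOn s (Set.Iio m))
    (hS : (Multiset.range m).map s = Multiset.replicate p 0 + T) (hT : ∀ x ∈ T, 0 < x)
    (hTc : T.map (c - ·) = T) {k : ℕ} (hpk : p ≤ k) (hkm : k < m) :
    s k + s (m + p - 1 - k) = c := by
  have hpm : p ≤ m := le_of_map_range_eq_replicate_add hS
  have hsplit : Multiset.range m = Multiset.range p + (Multiset.range (m - p)).map (p + ·) := by
    rw [← Multiset.range_add, Nat.add_sub_cancel' hpm]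
  have hhead : (Multiset.range p).map s = Multiset.replicate p 0 :=
    Multiset.eq_replicate.2 ⟨by simp, fun x hx => by
      obtain ⟨j, hj, rfl⟩ := Multiset.mem_map.1 hx
      exact eq_zero_of_map_range_eq_replicate_add hs hS hT (Multiset.mem_range.1 hj)⟩
  have htail : (Multiset.range (m - p)).map (fun j => s (p + j)) = T := by
    rw [hsplit, Multiset.map_add, hhead, Multiset.map_map] at hS
    exact add_left_cancel hS
  have hle : ∀ j, j < m - p → s (p + j) ≤ c := by
    intro j hj
    have hmem : c - s (p + j) ∈ T := hTc ▸ Multiset.mem_map_of_mem (c - ·)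
      (htail ▸ Multiset.mem_map_of_mem (fun j => s (p + j)) (Multiset.mem_range.2 hj))
    exact sub_pos.1 (hT _ hmem) |>.le
  -- the reflection `t` of `s` is again sorted and enumerates the same multiset, hence equals `s`
  set t : ℕ → α := fun j => if j < p then 0 else c - s (m + p - 1 - j) with ht
  have ht_mono : MonotoneOn t (Set.Iio m) := by
    intro i hi j hj hij
    simp only [Set.mem_Iio] at hi hj
    simp only [ht]
    split_ifs with hip hjp hjp
    · exact le_rfl
    · have := hle (m - 1 - j) (by omega)
      rw [show p + (m - 1 - j) = m + p - 1 - j by omega] at this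
      exact sub_nonneg.2 this
    · omega
    · exact sub_le_sub_left (hs (by simp; omega) (by simp; omega) (by omega)) c
  have ht_map : (Multiset.range m).map t = (Multiset.range m).map s := by
    rw [hS, hsplit, Multiset.map_add, Multiset.map_map, ← hTc, ← htail, Multiset.map_map]
    congr 1
    · exact Multiset.eq_replicate.2 ⟨by simp, fun x hx => by
        obtain ⟨j, hj, rfl⟩ := Multiset.mem_map.1 hx
        simp [ht, Multiset.mem_range.1 hj]⟩
    · conv_rhs => rw [← Multiset.map_range_sub (m - p), Multiset.map_map]
      refine Multiset.map_congr rfl fun j hj => ?_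
      rw [Multiset.mem_range] at hj
      simp only [Function.comp, ht, if_neg (by omega : ¬ p + j < p)]
      congr 2
      omega
  have := eqOn_of_monotoneOn_of_map_range_eq ht_mono hs ht_map (Set.mem_Iio.2 hkm)
  simp only [ht, if_neg (by omega : ¬ k < p)] at this
  rw [← this]
  abel

end SortedPoints

section GridPoints

variable {K : Type*} [Field K]

def innerGridPoints (c : K) (w : ℕ) : Multiset K :=
  (Multiset.range (w - 1)).map fun ℓ : ℕ => ((ℓ : K) + 1) * c / w

theorem map_range_mul_div_eq_zero_cons (c : K) {w : ℕ} (hw : w ≠ 0) :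
    (Multiset.range w).map (fun ℓ : ℕ => (ℓ : K) * c / w) = 0 ::ₘ innerGridPoints c w := by
  obtain ⟨v, rfl⟩ := Nat.exists_eq_add_of_le' (Nat.one_le_iff_ne_zero.2 hw)
  rw [add_comm, Multiset.range_add, Multiset.range_succ, Multiset.range_zero,
    Multiset.cons_zero, Multiset.singleton_add, Multiset.map_cons,
    Multiset.map_map, innerGridPoints, Nat.add_sub_cancel_left]
  simp only [Nat.cast_zero, zero_mul, zero_div, Function.comp_def, Nat.cast_add, Nat.cast_one,
    add_comm (1 : K)]

theorem map_sub_innerGridPoints [CharZero K] (c : K) (w : ℕ) :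
    (innerGridPoints c w).map (c - ·) = innerGridPoints c w := by
  conv_rhs => rw [innerGridPoints, ← Multiset.map_range_sub (w - 1), Multiset.map_map]
  rw [innerGridPoints, Multiset.map_map]
  refine Multiset.map_congr rfl fun ℓ hℓ => ?_
  rw [Multiset.mem_range] at hℓ
  have hw : (w : K) ≠ 0 := by norm_cast; omega
  have hcast : ((w - 1 - 1 - ℓ : ℕ) : K) = w - 2 - ℓ := by
    rw [Nat.cast_sub (by omega), Nat.cast_sub (by omega), Nat.cast_sub (by omega)]
    push_cast; ring
  simp only [Function.comp_apply, hcast]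
  field_simp
  ring

theorem pos_of_mem_innerGridPoints [LinearOrder K] [IsStrictOrderedRing K] {c x : K} {w : ℕ}
    (hc : 0 < c) (hx : x ∈ innerGridPoints c w) : 0 < x := by
  obtain ⟨ℓ, hℓ, rfl⟩ := Multiset.mem_map.1 hx
  have : 0 < w := by rw [Multiset.mem_range] at hℓ; omega
  positivity

theorem bind_map_range_mul_div_eq_replicate_add {ι : Type*} (I : Multiset ι) (c : K)
    {w : ι → ℕ} (hw : ∀ i ∈ I, w i ≠ 0) :
    (I.bind fun i => (Multiset.range (w i)).map fun ℓ : ℕ => (ℓ : K) * c / w i) =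
      Multiset.replicate (Multiset.card I) 0 + I.bind fun i => innerGridPoints c (w i) := by
  rw [Multiset.bind_congr fun i hi => map_range_mul_div_eq_zero_cons c (hw i hi),
    Multiset.bind_cons, Multiset.map_const']

end GridPoints

theorem stmt_1_general (n : ℕ) (hn : 1 ≤ n) (w : ℕ → ℕ) (hw0 : w 0 = 1)
    (hwpos : ∀ i ∈ Finset.Icc 1 n, 1 ≤ w i)
    (μ : ℕ)
    (s : ℕ → ℚ) (hmono : ∀ k, k + 1 < μ → s k ≤ s (k + 1))
    (hmult : (Multiset.range μ).map s =
      (Finset.range (n + 1)).val.bind fun i =>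
        (Multiset.range (w i)).map fun ℓ => (ℓ : ℚ) * μ / (w i))
    (α : ℕ → ℚ) (hα : ∀ k, α k = (k : ℚ) - s k) :
    (∀ k ≤ n, α k = k) ∧
    (∀ k, k ≤ μ - 2 → α (k + 1) ≤ α k + 1) ∧
    (∀ k, n + 1 ≤ k → k ≤ μ - 1 → α k + α (μ + n - k) = n) ∧
    (∀ k ≤ n, α k + α (n - k) = n) := by
  set T : Multiset ℚ := (Finset.range (n + 1)).val.bind fun i => innerGridPoints (μ : ℚ) (w i)
  have hS : (Multiset.range μ).map s = Multiset.replicate (n + 1) 0 + T := by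
    have hw : ∀ i ∈ (Finset.range (n + 1)).val, w i ≠ 0 := fun i hi => by
      rcases Nat.eq_zero_or_pos i with rfl | hi0
      · omega
      · have := hwpos i (Finset.mem_Icc.2 ⟨hi0, Nat.lt_succ_iff.1 (Finset.mem_range.1 hi)⟩)
        omega
    -- in `hmult`, `Multiset.range (w i)` is coerced to `Multiset ℚ` by the monad lift
    simp only [hmult, bind_pure_comp, Multiset.fmap_def, Multiset.map_map, Function.comp_def]
    rw [bind_map_range_mul_div_eq_replicate_add _ _ hw, Finset.card_val, Finset.card_range]
  have hnμ : n + 1 ≤ μ := le_of_map_range_eq_replicate_add hS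
  have hT : ∀ x ∈ T, 0 < x := fun x hx => by
    obtain ⟨i, -, hx⟩ := Multiset.mem_bind.1 hx
    exact pos_of_mem_innerGridPoints (by norm_cast; omega) hx
  have hTc : T.map ((μ : ℚ) - ·) = T := by
    simp only [T, Multiset.map_bind, map_sub_innerGridPoints]
  have hs : MonotoneOn s (Set.Iio μ) :=
    monotoneOn_of_le_succ Set.ordConnected_Iio fun k _ _ hk => hmono k hk
  have hzero : ∀ k ≤ n, s k = 0 := fun k hk =>
    eq_zero_of_map_range_eq_replicate_add hs hS hT (Nat.lt_succ_of_le hk)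
  refine ⟨fun k hk => ?_, fun k hk => ?_, fun k hk₁ hk₂ => ?_, fun k hk => ?_⟩
  · rw [hα, hzero k hk, sub_zero]
  · rw [hα, hα, Nat.cast_succ]
    linarith [hmono k (by omega)]
  · have := add_apply_reflect_eq_of_map_range_eq_replicate_add hs hS hT hTc hk₁ (by omega)
    rw [show μ + (n + 1) - 1 - k = μ + n - k by omega] at this
    rw [hα, hα, Nat.cast_sub (by omega), Nat.cast_add]
    linarith
  · rw [hα, hα, hzero k hk, hzero (n - k) (Nat.sub_le n k), Nat.cast_sub hk]
    ring

/-- with `α_k = k − s_k`: `α_k = k` for `0 ≤ k ≤ n`; `α_{k+1} ≤ α_k + 1`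
for `0 ≤ k ≤ μ−2`; `α_k + α_{μ+n−k} = n` for `n+1 ≤ k ≤ μ−1`; and `α_k + α_{n−k} = n`
for `0 ≤ k ≤ n`. -/
theorem stmt_1 (n : ℕ) (hn : 1 ≤ n) (w : ℕ → ℕ) (hw0 : w 0 = 1)
    (hwpos : ∀ i ∈ Finset.Icc 1 n, 1 ≤ w i)
    (μ : ℕ) (hμ : μ = 1 + ∑ i ∈ Finset.Icc 1 n, w i)
    (s : ℕ → ℚ) (hmono : ∀ k, k + 1 < μ → s k ≤ s (k + 1))
    (hmult : (Multiset.range μ).map s =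
      (Finset.range (n + 1)).val.bind fun i =>
        (Multiset.range (w i)).map fun ℓ => (ℓ : ℚ) * μ / (w i))
    (α : ℕ → ℚ) (hα : ∀ k, α k = (k : ℚ) - s k) :
    (∀ k ≤ n, α k = k) ∧
    (∀ k, k ≤ μ - 2 → α (k + 1) ≤ α k + 1) ∧
    (∀ k, n + 1 ≤ k → k ≤ μ - 1 → α k + α (μ + n - k) = n) ∧
    (∀ k ≤ n, α k + α (n - k) = n) :=
  stmt_1_general n hn w hw0 hwpos μ s hmono hmult α hα
end

section
/- For every nonzero complex number x: the matrix g(x) is symmetric and invertible; A_0(x)ᵀ g(x) = g(x) A_0(x); A_∞ᵀ g(x) + g(x) A_∞ = n·g(x); and x·(d/dx) g(x) = Rᵀ g(x) + g(x) R (equivalently, the bilinear form S defined by g is flat for the connection with residue matrix R in the x-direction and A_0(x), A_∞ are respectively self-adjoint and satisfy A_∞ + A_∞* = n·Id with respect to g). -/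
open Finset Matrix

noncomputable section

/-- The matrix `A_0(x)`: `A_0(x)_{1,0} = μx`, `A_0(x)_{k+1,k} = μ` for `1 ≤ k ≤ μ−2`,
`A_0(x)_{0,μ−1} = μ`, all other entries `0`. -/
def A0 (μ : ℕ) (x : ℂ) : Matrix (Fin μ) (Fin μ) ℂ :=
  Matrix.of fun i j =>
    if (i : ℕ) = (j : ℕ) + 1 then (if (j : ℕ) = 0 then (μ : ℂ) * x else (μ : ℂ))
    else if (i : ℕ) = 0 ∧ (j : ℕ) = μ - 1 then (μ : ℂ) else 0

/-- The diagonal matrix `A_∞ = diag(α_0, …, α_{μ−1})` with `α_k = k − s_k`. -/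
def Ainf (μ : ℕ) (s : ℕ → ℚ) : Matrix (Fin μ) (Fin μ) ℂ :=
  Matrix.diagonal fun k : Fin μ => ((k : ℕ) : ℂ) - ((s (k : ℕ) : ℚ) : ℂ)

/-- The diagonal matrix `R`: `R_{0,0} = 0`, `R_{k,k} = −1` for `1 ≤ k ≤ n`, and
`R_{k,k} = −s_{μ+n−k}/μ` for `n+1 ≤ k ≤ μ−1`. -/
def Rmat (μ n : ℕ) (s : ℕ → ℚ) : Matrix (Fin μ) (Fin μ) ℂ :=
  Matrix.diagonal fun k : Fin μ =>
    if (k : ℕ) = 0 then 0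
    else if (k : ℕ) ≤ n then -1
    else -((s (μ + n - (k : ℕ)) : ℚ) : ℂ) / (μ : ℂ)

/-- The symmetric matrix `g(x)`: `g(x)_{0,n} = g(x)_{n,0} = x⁻¹`, `g(x)_{k,n−k} = x⁻²`
for `1 ≤ k ≤ n−1`, `g(x)_{k,μ+n−k} = x⁻¹` for `n+1 ≤ k ≤ μ−1`, all other entries `0`. -/
def gmat (μ n : ℕ) (x : ℂ) : Matrix (Fin μ) (Fin μ) ℂ :=
  Matrix.of fun i j =>
    if (i : ℕ) + (j : ℕ) = n then
      (if (i : ℕ) = 0 ∨ (i : ℕ) = n then x⁻¹ else x⁻¹ ^ 2)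
    else if (i : ℕ) + (j : ℕ) = μ + n then x⁻¹ else 0

/-!
The nonzero entries of `g(x)` sit at the positions `(i, σ i)` of the involution `σ` exchanging
`i ↔ n - i` on `[0, n]` and `i ↔ μ + n - i` on `(n, μ)`, so `g(x)` is a diagonal matrix times a
permutation matrix. Each identity then becomes a statement about the pairs `(i, σ i)`; for `A_∞` and
`R` these are `α_i + α_{σ i} = n` and `r_i + r_{σ i} = -e_i`, where `x⁻¹ ^ e_i` is the entry of
row `i`. Both follow from two properties of the sorted exponents: `s_0 = ⋯ = s_n = 0`, because each
of the `n + 1` blocks of `S_w` contributes exactly one `0`; and `s_i + s_{μ+n-i} = μ` for `i > n`,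
because the nonzero part of `S_w` is invariant under `t ↦ μ - t`, and a sorted list that is a
permutation of its image under an order-reversing map is that image read backwards.
-/

lemma List.reverse_range_eq_map (N : ℕ) :
    (List.range N).reverse = (List.range N).map (N - 1 - ·) := by
  simp [List.range_eq_range', List.reverse_range']

lemma Multiset.map_range_reflect (N : ℕ) :
    (Multiset.range N).map (N - 1 - ·) = Multiset.range N := by
  rw [← Multiset.coe_range, Multiset.map_coe, ← List.reverse_range_eq_map, Multiset.coe_reverse]

section SortedSequence

variable {α : Type*} [LinearOrder α] {f : ℕ → α} {N : ℕ}

lemma sortedLE_map_range (hf : ∀ k, k + 1 < N → f k ≤ f (k + 1)) :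
    ((List.range N).map f).SortedLE := by
  rw [List.sortedLE_iff_isChain, List.isChain_map, List.isChain_range]
  exact fun m hm => hf m (by omega)

lemma eq_of_map_range_eq_replicate_add {k : ℕ} {a : α} {P : Multiset α}
    (hf : ∀ i, i + 1 < N → f i ≤ f (i + 1)) (hP : ∀ t ∈ P, a ≤ t)
    (h : (Multiset.range N).map f = Multiset.replicate k a + P) :
    k ≤ N ∧ (∀ i < k, f i = a) ∧ (Multiset.range (N - k)).map (fun i => f (k + i)) = P := by
  have hk : k ≤ N := by
    have := congrArg Multiset.card h
    simp only [Multiset.card_map, Multiset.card_range, Multiset.card_add,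
      Multiset.card_replicate] at this
    omega
  set q := P.sort (· ≤ ·)
  have hsplit : (List.range N).map f =
      (List.range k).map f ++ (List.range (N - k)).map (fun i => f (k + i)) := by
    conv_lhs => rw [← Nat.add_sub_cancel' hk, List.range_add]
    simp only [List.map_append, List.map_map, Function.comp_def]
  have hsorted : (List.replicate k a ++ q).SortedLE := by
    rw [List.sortedLE_iff_pairwise, List.pairwise_append]
    refine ⟨List.pairwise_replicate.mpr (Or.inr le_rfl), Multiset.pairwise_sort P _, ?_⟩
    intro x hx y hy
    rw [List.eq_of_mem_replicate hx]
    exact hP y ((Multiset.mem_sort _).mp hy)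
  have hperm : ((List.range N).map f).Perm (List.replicate k a ++ q) := by
    rw [← Multiset.coe_eq_coe, ← Multiset.coe_add, Multiset.sort_eq, Multiset.coe_replicate,
      ← h, ← Multiset.map_coe, Multiset.coe_range]
  have heq := hperm.eq_of_sortedLE (sortedLE_map_range hf) hsorted
  rw [hsplit] at heq
  obtain ⟨hfirst, hrest⟩ := List.append_inj heq (by simp)
  refine ⟨hk, fun i hi => List.eq_of_mem_replicate (hfirst ▸ List.mem_map_of_mem
    (List.mem_range.mpr hi)), ?_⟩
  rw [← Multiset.coe_range, Multiset.map_coe, hrest, Multiset.sort_eq]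

lemma add_apply_rev_eq_of_map_const_sub {β : Type*} [AddCommGroup β] [LinearOrder β]
    [IsOrderedAddMonoid β] {f : ℕ → β} {c : β}
    (hf : ∀ i, i + 1 < N → f i ≤ f (i + 1))
    (h : ((Multiset.range N).map f).map (c - ·) = (Multiset.range N).map f) :
    ∀ i < N, f i + f (N - 1 - i) = c := by
  set L := (List.range N).map f
  have hsorted : (L.reverse.map (c - ·)).SortedLE := by
    rw [List.sortedLE_iff_pairwise, List.pairwise_map, List.pairwise_reverse]
    exact (sortedLE_map_range hf).pairwise.imp fun hab => sub_le_sub_left hab c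
  have hperm : (L.reverse.map (c - ·)).Perm L := by
    have hL : (L : Multiset β) = (Multiset.range N).map f := by
      rw [← Multiset.coe_range, Multiset.map_coe]
    rw [← Multiset.coe_eq_coe, ← Multiset.map_coe, Multiset.coe_reverse, hL]
    exact h
  have heq := hperm.eq_of_sortedLE hsorted (sortedLE_map_range hf)
  rw [← List.map_reverse, List.reverse_range_eq_map, List.map_map, List.map_map,
    List.map_inj_left] at heq
  intro i hi
  rw [← heq i (List.mem_range.mpr hi)]
  simp

end SortedSequence

def scaledFractions (m v : ℕ) : Multiset ℚ :=
  (Multiset.range v).map fun ℓ : ℕ => (ℓ : ℚ) * m / v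

def posScaledFractions (m v : ℕ) : Multiset ℚ :=
  (Multiset.range (v - 1)).map fun ℓ : ℕ => ((ℓ : ℚ) + 1) * m / v

lemma scaledFractions_eq_zero_cons {m v : ℕ} (hv : v ≠ 0) :
    scaledFractions m v = 0 ::ₘ posScaledFractions m v := by
  obtain ⟨u, rfl⟩ := Nat.exists_eq_succ_of_ne_zero hv
  rw [scaledFractions, posScaledFractions, ← Multiset.coe_range, List.range_succ_eq_map,
    ← Multiset.cons_coe, ← Multiset.map_coe, Multiset.coe_range, Multiset.map_cons,
    Multiset.map_map]
  simp

lemma map_sub_posScaledFractions (m v : ℕ) :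
    (posScaledFractions m v).map ((m : ℚ) - ·) = posScaledFractions m v := by
  conv_rhs => rw [posScaledFractions, ← Multiset.map_range_reflect]
  rw [posScaledFractions, Multiset.map_map, Multiset.map_map]
  refine Multiset.map_congr rfl fun ℓ hℓ => ?_
  rw [Multiset.mem_range] at hℓ
  have hv : (v : ℚ) ≠ 0 := by norm_cast; omega
  simp only [Function.comp_apply, Nat.cast_sub (by omega : ℓ ≤ v - 1 - 1),
    Nat.cast_sub (by omega : 1 ≤ v - 1), Nat.cast_sub (by omega : 1 ≤ v)]
  field_simp
  ring

lemma nonneg_of_mem_posScaledFractions {m v : ℕ} {t : ℚ} (ht : t ∈ posScaledFractions m v) :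
    0 ≤ t := by
  obtain ⟨ℓ, -, rfl⟩ := Multiset.mem_map.mp ht
  positivity

lemma bind_scaledFractions {m : ℕ} {w : ℕ → ℕ} (I : Multiset ℕ) (hw : ∀ i ∈ I, w i ≠ 0) :
    I.bind (fun i => scaledFractions m (w i)) =
      Multiset.replicate (Multiset.card I) 0 + I.bind fun i => posScaledFractions m (w i) := by
  rw [Multiset.bind_congr fun i hi => scaledFractions_eq_zero_cons (hw i hi)]
  simp_rw [← Multiset.singleton_add]
  rw [Multiset.bind_add, Multiset.bind_singleton, Multiset.map_const']

section Spectrum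

variable {n μ : ℕ} {w : ℕ → ℕ} {s : ℕ → ℚ}

lemma map_range_eq_bind_scaledFractions
    (hmult : (Multiset.range μ).map s =
      (Finset.range (n + 1)).val.bind fun i =>
        (Multiset.range (w i)).map fun ℓ => (ℓ : ℚ) * μ / (w i)) :
    (Multiset.range μ).map s =
      (Finset.range (n + 1)).val.bind fun i => scaledFractions μ (w i) := by
  rw [hmult]
  refine Multiset.bind_congr fun i _ => ?_
  -- in `hmult`, `Multiset.range (w i)` is coerced to `Multiset ℚ` through the monad structure
  have : (do let a ← Multiset.range (w i); pure (a : ℚ) : Multiset ℚ) =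
      (Multiset.range (w i)).map fun a : ℕ => (a : ℚ) := Multiset.bind_singleton _ _
  rw [this, Multiset.map_map, scaledFractions]
  rfl

theorem spectrum_zero_prefix_and_symmetric (hw0 : w 0 = 1)
    (hwpos : ∀ i ∈ Finset.Icc 1 n, 1 ≤ w i) (hmono : ∀ k, k + 1 < μ → s k ≤ s (k + 1))
    (hmult : (Multiset.range μ).map s =
      (Finset.range (n + 1)).val.bind fun i =>
        (Multiset.range (w i)).map fun ℓ => (ℓ : ℚ) * μ / (w i)) :
    n < μ ∧ (∀ k ≤ n, s k = 0) ∧ ∀ i, n < i → i < μ → s i + s (μ + n - i) = μ := by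
  have hw : ∀ i ∈ (Finset.range (n + 1)).val, w i ≠ 0 := by
    intro i hi
    rw [Finset.mem_val, Finset.mem_range] at hi
    rcases Nat.eq_zero_or_pos i with rfl | hi0
    · omega
    · have := hwpos i (Finset.mem_Icc.mpr ⟨hi0, by omega⟩)
      omega
  set P := (Finset.range (n + 1)).val.bind fun i => posScaledFractions μ (w i)
  have hS : (Multiset.range μ).map s = Multiset.replicate (n + 1) 0 + P := by
    rw [map_range_eq_bind_scaledFractions hmult, bind_scaledFractions _ hw, Finset.card_val,
      Finset.card_range]
  have hPnonneg : ∀ t ∈ P, 0 ≤ t := by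
    intro t ht
    obtain ⟨i, -, hti⟩ := Multiset.mem_bind.mp ht
    exact nonneg_of_mem_posScaledFractions hti
  obtain ⟨hnμ, hzero, hP⟩ := eq_of_map_range_eq_replicate_add hmono hPnonneg hS
  have hPsym : P.map ((μ : ℚ) - ·) = P := by
    rw [Multiset.map_bind]
    exact Multiset.bind_congr fun i _ => map_sub_posScaledFractions _ _
  have hrefl := add_apply_rev_eq_of_map_const_sub (f := fun i => s (n + 1 + i)) (N := μ - (n + 1))
    (fun i hi => hmono _ (by omega)) (by rw [hP, hPsym])
  refine ⟨by omega, fun k hk => hzero k (by omega), fun i hni hiμ => ?_⟩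
  have := hrefl (i - (n + 1)) (by omega)
  rwa [show n + 1 + (i - (n + 1)) = i by omega,
    show n + 1 + (μ - (n + 1) - 1 - (i - (n + 1))) = μ + n - i by omega] at this

end Spectrum

namespace Matrix

variable {ι R : Type*} [DecidableEq ι] [CommRing R] {σ : ι → ι} (d : ι → R)

lemma mul_submatrix_diagonal_apply [Fintype ι] (M : Matrix ι ι R) (i j : ι) :
    (M * (diagonal d).submatrix id σ) i j = M i (σ j) * d (σ j) := by
  simp [mul_apply, diagonal_apply]

lemma submatrix_diagonal_mul_apply [Fintype ι] (hσ : Function.Involutive σ) (M : Matrix ι ι R)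
    (i j : ι) :
    ((diagonal d).submatrix id σ * M) i j = d i * M (σ i) j := by
  simp [mul_apply, diagonal_apply, ← hσ.eq_iff]

lemma transpose_submatrix_diagonal (hσ : Function.Involutive σ) (hd : ∀ i, d (σ i) = d i) :
    ((diagonal d).submatrix id σ)ᵀ = (diagonal d).submatrix id σ := by
  ext i j
  simp only [transpose_apply, submatrix_apply, id, diagonal_apply]
  by_cases h : i = σ j
  · rw [if_pos (hσ.eq_iff.mp h.symm), if_pos h, h, hd]
  · rw [if_neg fun h' => h (hσ.eq_iff.mp h'.symm), if_neg h]

lemma isUnit_submatrix_diagonal [Fintype ι] (hσ : Function.Involutive σ) (hd : ∀ i, IsUnit (d i)) :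
    IsUnit ((diagonal d).submatrix id σ) := by
  rw [isUnit_iff_isUnit_det, ← hσ.coe_toPerm, det_permute', det_diagonal]
  exact ((Equiv.Perm.sign _).isUnit.map (Int.castRingHom R)).mul (IsUnit.prod_univ_iff.mpr hd)

lemma IsDiag.transpose_mul_add_mul_submatrix_diagonal [Fintype ι] {A : Matrix ι ι R}
    (hA : A.IsDiag) :
    Aᵀ * (diagonal d).submatrix id σ + (diagonal d).submatrix id σ * A =
      (diagonal d).submatrix id σ * diagonal fun j => A (σ j) (σ j) + A j j := by
  rw [← hA.diagonal_diag]
  ext i j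
  simp only [Matrix.add_apply, diagonal_transpose, diagonal_mul, mul_diagonal, submatrix_apply,
    id, diag_apply, diagonal_apply]
  split_ifs with hij
  · rw [hij]; ring
  · ring

end Matrix

lemma hasDerivAt_inv_pow {𝕜 : Type*} [NontriviallyNormedField 𝕜] {x : 𝕜} (hx : x ≠ 0) (k : ℕ) :
    HasDerivAt (fun y => y⁻¹ ^ k) (x⁻¹ * (x⁻¹ ^ k * -k)) x := by
  refine ((hasDerivAt_inv hx).fun_pow k).congr_deriv ?_
  rcases k with _ | k
  · simp
  · rw [Nat.add_sub_cancel, ← inv_pow]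
    ring

section PairingMatrix

variable {μ n : ℕ}

def gmatPartner (h : n < μ) (i : Fin μ) : Fin μ :=
  ⟨if (i : ℕ) ≤ n then n - i else μ + n - i, by split <;> omega⟩

lemma gmatPartner_val (h : n < μ) (i : Fin μ) :
    (gmatPartner h i : ℕ) = if (i : ℕ) ≤ n then n - i else μ + n - i := rfl

lemma gmatPartner_involutive (h : n < μ) : Function.Involutive (gmatPartner h) := by
  intro i
  ext
  simp only [gmatPartner_val]
  split_ifs <;> omega

def gmatExp (n i : ℕ) : ℕ := if 0 < i ∧ i < n then 2 else 1

lemma gmatExp_gmatPartner (h : n < μ) (i : Fin μ) : gmatExp n (gmatPartner h i) = gmatExp n i := by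
  simp only [gmatExp, gmatPartner_val]
  split_ifs <;> omega

lemma gmat_eq_submatrix (h : n < μ) (x : ℂ) :
    gmat μ n x = (diagonal fun i : Fin μ => x⁻¹ ^ gmatExp n i).submatrix id (gmatPartner h) := by
  ext i j
  have := i.isLt; have := j.isLt
  simp only [gmat, of_apply, submatrix_apply, id, diagonal_apply, gmatExp, Fin.ext_iff,
    gmatPartner_val]
  split_ifs <;> first | rfl | (exfalso; omega) | simp

lemma gmat_transpose (h : n < μ) (x : ℂ) : (gmat μ n x)ᵀ = gmat μ n x := by
  rw [gmat_eq_submatrix h]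
  exact transpose_submatrix_diagonal _ (gmatPartner_involutive h) fun i => by
    rw [gmatExp_gmatPartner]

lemma isUnit_gmat (h : n < μ) {x : ℂ} (hx : x ≠ 0) : IsUnit (gmat μ n x) := by
  rw [gmat_eq_submatrix h]
  exact isUnit_submatrix_diagonal _ (gmatPartner_involutive h) fun _ =>
    (isUnit_iff_ne_zero.mpr (inv_ne_zero hx)).pow _

lemma A0_transpose_mul_gmat (hn : 0 < n) (h : n < μ) {x : ℂ} (hx : x ≠ 0) :
    (A0 μ x)ᵀ * gmat μ n x = gmat μ n x * A0 μ x := by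
  ext i j
  rw [gmat_eq_submatrix h, mul_submatrix_diagonal_apply,
    submatrix_diagonal_mul_apply _ (gmatPartner_involutive h)]
  have := i.isLt; have := j.isLt
  simp only [transpose_apply, A0, of_apply, gmatExp, gmatPartner_val]
  -- `σ i = j + 1 ↔ σ j = i + 1`, except that the corner entry `A0 0 (μ - 1)` is paired with
  -- `A0 (n + 1) n`; the factor `x` of `A0 1 0` meets the extra `x⁻¹` of row `n - 1`.
  split_ifs <;> first | (exfalso; omega) | (simp; done) | field_simp

variable {s : ℕ → ℚ}

lemma Ainf_gmatPartner_add (h : n < μ) (hs0 : ∀ k ≤ n, s k = 0)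
    (hsym : ∀ i, n < i → i < μ → s i + s (μ + n - i) = μ) (j : Fin μ) :
    Ainf μ s (gmatPartner h j) (gmatPartner h j) + Ainf μ s j j = n := by
  simp only [Ainf, diagonal_apply_eq, gmatPartner_val]
  split_ifs with hj
  · rw [hs0 j hj, hs0 _ (by omega), Nat.cast_sub hj]
    push_cast
    ring
  · have hsum : ((s j + s (μ + n - j) : ℚ) : ℂ) = μ := by
      rw [hsym j (by omega) j.isLt]; push_cast; rfl
    rw [Nat.cast_sub (by omega)]
    push_cast at hsum ⊢
    linear_combination -hsum

lemma Ainf_transpose_mul_gmat_add (h : n < μ) (hs0 : ∀ k ≤ n, s k = 0)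
    (hsym : ∀ i, n < i → i < μ → s i + s (μ + n - i) = μ) (x : ℂ) :
    (Ainf μ s)ᵀ * gmat μ n x + gmat μ n x * Ainf μ s = (n : ℂ) • gmat μ n x := by
  rw [gmat_eq_submatrix h, (isDiag_diagonal _).transpose_mul_add_mul_submatrix_diagonal _
    (A := Ainf μ s), smul_eq_mul_diagonal]
  simp only [Ainf_gmatPartner_add h hs0 hsym]

lemma Rmat_gmatPartner_add (hn : 0 < n) (h : n < μ)
    (hsym : ∀ i, n < i → i < μ → s i + s (μ + n - i) = μ) (j : Fin μ) :
    Rmat μ n s (gmatPartner h j) (gmatPartner h j) + Rmat μ n s j j = -(gmatExp n j) := by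
  simp only [Rmat, diagonal_apply_eq, gmatPartner_val, gmatExp]
  split_ifs with hj <;> first | (exfalso; omega) | (norm_num; done) | skip
  have hμ : (μ : ℂ) ≠ 0 := by norm_cast; omega
  have hsum : ((s j + s (μ + n - j) : ℚ) : ℂ) = μ := by
    rw [hsym j (by omega) j.isLt]; push_cast; rfl
  rw [show μ + n - (μ + n - (j : ℕ)) = j by omega]
  push_cast at hsum ⊢
  field_simp
  linear_combination -hsum

lemma hasDerivAt_gmat_apply (hn : 0 < n) (h : n < μ)
    (hsym : ∀ i, n < i → i < μ → s i + s (μ + n - i) = μ) {x : ℂ} (hx : x ≠ 0) (i j : Fin μ) :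
    HasDerivAt (fun y : ℂ => gmat μ n y i j)
      (x⁻¹ * (((Rmat μ n s)ᵀ * gmat μ n x + gmat μ n x * Rmat μ n s) i j)) x := by
  have hg : ∀ y, gmat μ n y i j = if i = gmatPartner h j then y⁻¹ ^ gmatExp n i else 0 := by
    simp [gmat_eq_submatrix h, diagonal_apply]
  rw [gmat_eq_submatrix h, (isDiag_diagonal _).transpose_mul_add_mul_submatrix_diagonal _
    (A := Rmat μ n s), mul_diagonal, Rmat_gmatPartner_add hn h hsym, ← gmat_eq_submatrix h]
  simp only [hg]
  split_ifs with hij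
  · rw [hij, gmatExp_gmatPartner]
    exact hasDerivAt_inv_pow hx _
  · simpa using hasDerivAt_const x (0 : ℂ)

end PairingMatrix

theorem stmt_2_general (n : ℕ) (hn : 1 ≤ n) (w : ℕ → ℕ) (hw0 : w 0 = 1)
    (hwpos : ∀ i ∈ Finset.Icc 1 n, 1 ≤ w i)
    (μ : ℕ)
    (s : ℕ → ℚ) (hmono : ∀ k, k + 1 < μ → s k ≤ s (k + 1))
    (hmult : (Multiset.range μ).map s =
      (Finset.range (n + 1)).val.bind fun i =>
        (Multiset.range (w i)).map fun ℓ => (ℓ : ℚ) * μ / (w i))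
    (x : ℂ) (hx : x ≠ 0) :
    (gmat μ n x)ᵀ = gmat μ n x ∧
    IsUnit (gmat μ n x) ∧
    (A0 μ x)ᵀ * gmat μ n x = gmat μ n x * A0 μ x ∧
    (Ainf μ s)ᵀ * gmat μ n x + gmat μ n x * Ainf μ s = (n : ℂ) • gmat μ n x ∧
    (∀ i j : Fin μ, HasDerivAt (fun y : ℂ => gmat μ n y i j)
      (x⁻¹ * (((Rmat μ n s)ᵀ * gmat μ n x + gmat μ n x * Rmat μ n s) i j)) x) := by
  obtain ⟨hnμ, hs0, hsym⟩ := spectrum_zero_prefix_and_symmetric hw0 hwpos hmono hmult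
  exact ⟨gmat_transpose hnμ x, isUnit_gmat hnμ hx, A0_transpose_mul_gmat hn hnμ hx,
    Ainf_transpose_mul_gmat_add hnμ hs0 hsym x, hasDerivAt_gmat_apply hn hnμ hsym hx⟩

/-- for every `x ≠ 0`, `g(x)` is symmetric and invertible, `A_0(x)` is
self-adjoint for `g(x)`, `A_∞ + A_∞^* = n·Id` with respect to `g(x)`, and
`x·(d/dx)g(x) = Rᵀ g(x) + g(x) R`. -/
theorem stmt_2 (n : ℕ) (hn : 1 ≤ n) (w : ℕ → ℕ) (hw0 : w 0 = 1)
    (hwpos : ∀ i ∈ Finset.Icc 1 n, 1 ≤ w i)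
    (μ : ℕ) (hμ : μ = 1 + ∑ i ∈ Finset.Icc 1 n, w i)
    (s : ℕ → ℚ) (hmono : ∀ k, k + 1 < μ → s k ≤ s (k + 1))
    (hmult : (Multiset.range μ).map s =
      (Finset.range (n + 1)).val.bind fun i =>
        (Multiset.range (w i)).map fun ℓ => (ℓ : ℚ) * μ / (w i))
    (x : ℂ) (hx : x ≠ 0) :
    (gmat μ n x)ᵀ = gmat μ n x ∧
    IsUnit (gmat μ n x) ∧
    (A0 μ x)ᵀ * gmat μ n x = gmat μ n x * A0 μ x ∧
    (Ainf μ s)ᵀ * gmat μ n x + gmat μ n x * Ainf μ s = (n : ℂ) • gmat μ n x ∧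
    (∀ i j : Fin μ, HasDerivAt (fun y : ℂ => gmat μ n y i j)
      (x⁻¹ * (((Rmat μ n s)ᵀ * gmat μ n x + gmat μ n x * Rmat μ n s) i j)) x) :=
  stmt_2_general n hn w hw0 hwpos μ s hmono hmult x hx
end
end

section
/- For every complex number x one has the matrix identity x·(d/dx)A_0(x) = (1/μ)·A_0(x) + [A_0(x), R] + (1/μ)·[A_0(x), A_∞], where [·,·] denotes the commutator. (This identity expresses the compatibility relation ∇(R_0) + Φ = [Φ, R_∞] of the Frobenius type structure on ℂ*, equivalently the flatness of the connection whose matrix is (A_0(x)/θ + A_∞)dθ/θ + (R − A_0(x)/(μθ))dx/x.) -/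
open Finset Matrix

noncomputable section

/-!
`A0 μ x` is supported on the cyclic subdiagonal, and for a diagonal `D` the commutator
`[A0, D]` multiplies the entry `(i, j)` by `D j - D i`. Grouping `R` and `A_∞` into
`μ • R + A_∞`, the identity reduces to `μ • R + A_∞ = diag (k - μ [k ≠ 0])`, that is, to
`s_0 = ⋯ = s_n = 0` and `s_k + s_{μ+n-k} = μ` for `n < k < μ`. Both come from the shape of
`S_w` (`weightMultiset`): every block `{ℓμ/w_i}` contributes exactly one zero, so the sorted
sequence starts with `n + 1` zeros, and the nonzero elements form a multiset invariant under
`q ↦ μ - q` (through `ℓ ↦ w_i - ℓ`); a nondecreasing sequence whose multiset is invariant under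
an order-reversing involution is reflected termwise.
-/

theorem Finset.eq_range_card_of_forall_le_mem {Z : Finset ℕ} (hZ : ∀ k ∈ Z, ∀ j ≤ k, j ∈ Z) :
    Z = range #Z := by
  refine eq_of_subset_of_card_le (fun k hk => mem_range.2 ?_) (card_range _).le
  have : range (k + 1) ⊆ Z := fun j hj => hZ k hk j (Nat.lt_succ_iff.1 (mem_range.1 hj))
  simpa using card_le_card this

theorem Finset.Ico_val_map_reflect (a b : ℕ) :
    (Ico a b).val.map (fun k => a + b - 1 - k) = (Ico a b).val := by
  rcases lt_or_ge a b with hab | hba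
  · have hinj : Set.InjOn (fun k => a + b - 1 - k) (Ico a b : Set ℕ) := by
      intro i hi j hj hij
      simp only [coe_Ico, Set.mem_Ico] at hi hj hij
      omega
    rw [← image_val_of_injOn hinj, Nat.Ico_image_const_sub_eq_Ico (by omega)]
    congr 2 <;> omega
  · simp [Ico_eq_empty_of_le hba]

theorem eqOn_of_monotoneOn_of_map_Ico_eq {α : Type*} [LinearOrder α] {f g : ℕ → α} {a b : ℕ}
    (hf : MonotoneOn f (Set.Ico a b)) (hg : MonotoneOn g (Set.Ico a b))
    (h : (Ico a b).val.map f = (Ico a b).val.map g) : Set.EqOn f g (Set.Ico a b) := by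
  have mem_range' : ∀ {k}, k ∈ List.range' a (b - a) ↔ k ∈ Set.Ico a b := by
    intro k; rw [List.mem_range'_1, Set.mem_Ico]; omega
  have sorted : ∀ {f : ℕ → α}, MonotoneOn f (Set.Ico a b) →
      ((List.range' a (b - a)).map f).SortedLE := fun hf => by
    rw [List.sortedLE_iff_pairwise, List.pairwise_map]
    exact (List.pairwise_lt_range' 1).imp_of_mem fun hi hj hij =>
      hf (mem_range'.1 hi) (mem_range'.1 hj) hij.le
  rw [Nat.Ico_eq_range', Multiset.map_coe, Multiset.map_coe, Multiset.coe_eq_coe] at h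
  exact fun k hk =>
    List.map_inj_left.1 (h.eq_of_sortedLE (sorted hf) (sorted hg)) k (mem_range'.2 hk)

theorem add_reflect_eq_of_map_Ico_sub_eq {α : Type*} [AddCommGroup α] [LinearOrder α]
    [IsOrderedAddMonoid α] {s : ℕ → α} {a b : ℕ} {c : α} (hs : MonotoneOn s (Set.Ico a b))
    (h : ((Ico a b).val.map s).map (c - ·) = (Ico a b).val.map s) {k : ℕ} (hk : k ∈ Set.Ico a b) :
    s k + s (a + b - 1 - k) = c := by
  set g : ℕ → α := fun j => c - s (a + b - 1 - j)
  have hg : MonotoneOn g (Set.Ico a b) := by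
    intro i hi j hj hij
    simp only [Set.mem_Ico] at hi hj
    exact sub_le_sub_left (hs ⟨by omega, by omega⟩ ⟨by omega, by omega⟩ (by omega)) c
  have hmap :
      (Ico a b).val.map g = (((Ico a b).val.map fun j => a + b - 1 - j).map s).map (c - ·) := by
    simp only [Multiset.map_map]
    rfl
  rw [Ico_val_map_reflect, h] at hmap
  exact eq_sub_iff_add_eq.1 (eqOn_of_monotoneOn_of_map_Ico_eq hs hg hmap.symm hk)

def weightMultiset (n : ℕ) (w : ℕ → ℕ) (μ : ℕ) : Multiset ℚ :=
  (Finset.range (n + 1)).val.bind fun i =>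
    (Multiset.range (w i)).map fun ℓ : ℕ => (ℓ : ℚ) * μ / (w i)

section weightMultiset

variable {n μ : ℕ} {w : ℕ → ℕ}

theorem nonneg_of_mem_weightMultiset {q : ℚ} (hq : q ∈ weightMultiset n w μ) : 0 ≤ q := by
  simp only [weightMultiset, Multiset.mem_bind, Multiset.mem_map] at hq
  obtain ⟨i, -, ℓ, -, rfl⟩ := hq
  positivity

theorem injective_natCast_mul_div {m v : ℕ} (hm : m ≠ 0) (hv : v ≠ 0) :
    Function.Injective fun ℓ : ℕ => (ℓ : ℚ) * m / v := by
  intro a b hab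
  simpa [hm, hv] using hab

variable (hμ : μ ≠ 0) (hw : ∀ i ∈ range (n + 1), w i ≠ 0)
include hμ hw

theorem count_zero_weightMultiset : (weightMultiset n w μ).count 0 = n + 1 := by
  have hblock : ∀ i ∈ range (n + 1),
      ((Multiset.range (w i)).map fun ℓ : ℕ => (ℓ : ℚ) * μ / (w i)).count 0 = 1 := by
    intro i hi
    have := Multiset.count_map_eq_count' _ (Multiset.range (w i))
      (injective_natCast_mul_div hμ (hw i hi)) 0
    simp only [Nat.cast_zero, zero_mul, zero_div] at this
    rw [this]
    exact Multiset.count_eq_one_of_mem (Multiset.nodup_range _)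
      (Multiset.mem_range.2 (Nat.pos_of_ne_zero (hw i hi)))
  rw [weightMultiset, Multiset.count_bind]
  change ∑ i ∈ range (n + 1), _ = _
  rw [sum_congr rfl hblock]
  simp

theorem map_sub_filter_ne_zero_weightMultiset :
    ((weightMultiset n w μ).filter (· ≠ 0)).map ((μ : ℚ) - ·) =
      (weightMultiset n w μ).filter (· ≠ 0) := by
  rw [weightMultiset, Multiset.filter_bind, Multiset.map_bind]
  refine Multiset.bind_congr fun i hi => ?_
  set f : ℕ → ℚ := fun ℓ => ℓ * μ / (w i)
  have hwi : (w i : ℚ) ≠ 0 := Nat.cast_ne_zero.2 (hw i hi)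
  have hnonzero : ((Multiset.range (w i)).map f).filter (· ≠ 0) = (Ico 1 (w i)).val.map f := by
    rw [Multiset.filter_map, ← range_val, ← filter_val]
    congr 2
    ext ℓ
    simp [f, hμ, hwi, Nat.one_le_iff_ne_zero, and_comm]
  have hreflect : ∀ ℓ ∈ (Ico 1 (w i)).val,
      (((μ : ℚ) - ·) ∘ f) ℓ = (f ∘ (1 + w i - 1 - ·)) ℓ := by
    intro ℓ hℓ
    rw [mem_val, mem_Ico] at hℓ
    simp only [f, Function.comp_apply]
    rw [Nat.cast_sub (by omega), Nat.add_sub_cancel_left]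
    field_simp
  rw [hnonzero, Multiset.map_map, Multiset.map_congr rfl hreflect,
    ← Multiset.map_map f, Ico_val_map_reflect]

end weightMultiset

section sortedWeights

variable {n μ : ℕ} {w : ℕ → ℕ} {s : ℕ → ℚ}
  (hμ : μ ≠ 0) (hw : ∀ i ∈ range (n + 1), w i ≠ 0)
  (hmono : MonotoneOn s (Set.Iio μ)) (hs : (Multiset.range μ).map s = weightMultiset n w μ)
include hμ hw hmono hs

theorem filter_range_eq_zero_eq_range : (range μ).filter (s · = 0) = range (n + 1) := by
  have hcard : #((range μ).filter (s · = 0)) = n + 1 := by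
    rw [← count_zero_weightMultiset hμ hw, ← hs, Multiset.count_map, ← range_val, ← card_val,
      filter_val]
    simp only [eq_comm]
  rw [← hcard]
  refine eq_range_card_of_forall_le_mem fun k hk j hjk => ?_
  rw [mem_filter, mem_range] at hk ⊢
  have hj : j < μ := by omega
  have hsj : 0 ≤ s j := nonneg_of_mem_weightMultiset
    (hs ▸ Multiset.mem_map_of_mem s (Multiset.mem_range.2 hj))
  exact ⟨hj, le_antisymm (hk.2 ▸ hmono hj hk.1 hjk) hsj⟩

theorem lt_and_eq_zero_of_le {k : ℕ} (hk : k ≤ n) : k < μ ∧ s k = 0 := by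
  have hk' : k ∈ (range μ).filter (s · = 0) := by
    rw [filter_range_eq_zero_eq_range hμ hw hmono hs]
    exact mem_range.2 (Nat.lt_succ_of_le hk)
  simpa using hk'

theorem add_reflect_eq {k : ℕ} (hk : n < k) (hkμ : k < μ) : s k + s (μ + n - k) = μ := by
  have hnonzero : (range μ).filter (s · ≠ 0) = Ico (n + 1) μ := by
    rw [filter_not, filter_range_eq_zero_eq_range hμ hw hmono hs, range_eq_Ico, range_eq_Ico,
      Ico_sdiff_Ico_left, max_eq_right (Nat.zero_le _)]
  have hsymm : ((Ico (n + 1) μ).val.map s).map ((μ : ℚ) - ·) = (Ico (n + 1) μ).val.map s := by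
    have := map_sub_filter_ne_zero_weightMultiset (n := n) hμ hw
    rw [← hs, Multiset.filter_map, ← range_val, ← filter_val] at this
    simpa only [Function.comp_def, hnonzero] using this
  have := add_reflect_eq_of_map_Ico_sub_eq (hmono.mono fun j hj => hj.2) hsymm ⟨hk, hkμ⟩
  rwa [show n + 1 + μ - 1 - k = μ + n - k by omega] at this

end sortedWeights

def A0Deriv (μ : ℕ) : Matrix (Fin μ) (Fin μ) ℂ :=
  Matrix.of fun i j => if (i : ℕ) = 1 ∧ (j : ℕ) = 0 then (μ : ℂ) else 0

theorem A0_apply_eq (μ : ℕ) (x : ℂ) (i j : Fin μ) :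
    A0 μ x i j = x * A0Deriv μ i j + A0 μ 0 i j := by
  simp only [A0, A0Deriv, of_apply]
  split_ifs <;> first | omega | ring

theorem hasDerivAt_A0_apply (μ : ℕ) (x : ℂ) (i j : Fin μ) :
    HasDerivAt (fun y => A0 μ y i j) (A0Deriv μ i j) x := by
  rw [funext fun y => A0_apply_eq μ y i j]
  simpa using ((hasDerivAt_id x).mul_const (A0Deriv μ i j)).add_const (A0 μ 0 i j)

theorem A0_add_commutator_diagonal {μ : ℕ} (hμ : 1 < μ) (x : ℂ) :
    A0 μ x + (A0 μ x * diagonal (fun k : Fin μ => (k : ℂ) - if (k : ℕ) = 0 then 0 else (μ : ℂ))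
      - diagonal (fun k : Fin μ => (k : ℂ) - if (k : ℕ) = 0 then 0 else (μ : ℂ)) * A0 μ x) =
      ((μ : ℂ) * x) • A0Deriv μ := by
  ext i j
  simp only [Matrix.add_apply, Matrix.sub_apply, mul_diagonal, diagonal_mul, Matrix.smul_apply,
    smul_eq_mul, A0, A0Deriv, of_apply]
  split_ifs <;> first | omega | (push_cast [*]; ring)

theorem smul_Rmat_add_Ainf {μ n : ℕ} {s : ℕ → ℚ} (hμ : μ ≠ 0)
    (hzero : ∀ k ≤ n, s k = 0) (hreflect : ∀ k, n < k → k < μ → s k + s (μ + n - k) = μ) :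
    (μ : ℂ) • Rmat μ n s + Ainf μ s =
      diagonal fun k : Fin μ => (k : ℂ) - if (k : ℕ) = 0 then 0 else (μ : ℂ) := by
  rw [Rmat, Ainf, ← diagonal_smul, diagonal_add]
  congr 1
  funext k
  simp only [Pi.smul_apply, smul_eq_mul]
  have hμC : (μ : ℂ) ≠ 0 := Nat.cast_ne_zero.2 hμ
  split_ifs with h0 hn
  · simp [h0, hzero 0 (Nat.zero_le _)]
  · simp [hzero k hn]
    ring
  · have := congrArg ((↑) : ℚ → ℂ) (hreflect k (by omega) k.2)
    push_cast at this
    field_simp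
    linear_combination -this

/-- for every complex `x`,
`x·(d/dx)A_0(x) = (1/μ)·A_0(x) + [A_0(x), R] + (1/μ)·[A_0(x), A_∞]`. -/
theorem stmt_3 (n : ℕ) (hn : 1 ≤ n) (w : ℕ → ℕ) (hw0 : w 0 = 1)
    (hwpos : ∀ i ∈ Finset.Icc 1 n, 1 ≤ w i)
    (μ : ℕ) (hμ : μ = 1 + ∑ i ∈ Finset.Icc 1 n, w i)
    (s : ℕ → ℚ) (hmono : ∀ k, k + 1 < μ → s k ≤ s (k + 1))
    (hmult : (Multiset.range μ).map s =
      (Finset.range (n + 1)).val.bind fun i =>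
        (Multiset.range (w i)).map fun ℓ => (ℓ : ℚ) * μ / (w i))
    (x : ℂ) :
    ∃ d : Matrix (Fin μ) (Fin μ) ℂ,
      (∀ i j : Fin μ, HasDerivAt (fun y : ℂ => A0 μ y i j) (d i j) x) ∧
      x • d = ((μ : ℂ))⁻¹ • A0 μ x
        + (A0 μ x * Rmat μ n s - Rmat μ n s * A0 μ x)
        + ((μ : ℂ))⁻¹ • (A0 μ x * Ainf μ s - Ainf μ s * A0 μ x) := by
  have hμ0 : μ ≠ 0 := by omega
  have hw : ∀ i ∈ range (n + 1), w i ≠ 0 := fun i hi => by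
    rcases Nat.eq_zero_or_pos i with rfl | hi0
    · omega
    · have := hwpos i (mem_Icc.2 ⟨hi0, Nat.lt_succ_iff.1 (mem_range.1 hi)⟩)
      omega
  have hmono' : MonotoneOn s (Set.Iio μ) :=
    monotoneOn_of_le_succ Set.ordConnected_Iio fun k _ _ hk => by
      simpa using hmono k (by simpa using hk)
  -- `ℓ : ℚ` in `hmult` casts `Multiset.range (w i)` to `Multiset ℚ` through the monad structure.
  have hs : (Multiset.range μ).map s = weightMultiset n w μ := by
    simpa [weightMultiset, Multiset.map_map] using hmult
  have hD := smul_Rmat_add_Ainf hμ0 (fun k hk => (lt_and_eq_zero_of_le hμ0 hw hmono' hs hk).2)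
    fun k hk hkμ => add_reflect_eq hμ0 hw hmono' hs hk hkμ
  have h1μ : 1 < μ := (lt_and_eq_zero_of_le hμ0 hw hmono' hs (le_refl n)).1.trans_le' hn
  refine ⟨A0Deriv μ, hasDerivAt_A0_apply μ x, ?_⟩
  calc x • A0Deriv μ
      = (μ : ℂ)⁻¹ • (A0 μ x + (A0 μ x * ((μ : ℂ) • Rmat μ n s + Ainf μ s)
          - ((μ : ℂ) • Rmat μ n s + Ainf μ s) * A0 μ x)) := by
        rw [hD, A0_add_commutator_diagonal h1μ, smul_smul, ← mul_assoc,
          inv_mul_cancel₀ (Nat.cast_ne_zero.2 hμ0), one_mul]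
    _ = _ := by
        simp only [Matrix.mul_add, Matrix.add_mul, Matrix.mul_smul, Matrix.smul_mul]
        match_scalars <;> field_simp
end
end

section
/- Assume μ ≥ n+2. For every nonzero complex number θ, every eigenvalue λ of the matrix R^ψ − (1/(μθ))·Ā_0^ψ is a real number with −1 < λ ≤ 0; in fact its eigenvalues are 0 (with multiplicity n+1) and −s_{μ+n−k}/μ for n+1 ≤ k ≤ μ−1. -/
open Finset Matrix Polynomial

noncomputable section

/-- The matrix `Ā_0^ψ`: `(Ā_0^ψ)_{k+1,k} = μ` for `k ∈ {0, …, μ−2} \ {n}`,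
`(Ā_0^ψ)_{0,μ−1} = μ`, all other entries `0`. -/
def A0psibar (μ n : ℕ) : Matrix (Fin μ) (Fin μ) ℂ :=
  Matrix.of fun i j =>
    if (i : ℕ) = (j : ℕ) + 1 ∧ (j : ℕ) ≠ n then (μ : ℂ)
    else if (i : ℕ) = 0 ∧ (j : ℕ) = μ - 1 then (μ : ℂ) else 0

/-- The diagonal matrix `R^ψ`: `(R^ψ)_{k,k} = 0` for `0 ≤ k ≤ n`, and
`(R^ψ)_{k,k} = −s_{μ+n−k}/μ` for `n+1 ≤ k ≤ μ−1`. -/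
def Rpsi (μ n : ℕ) (s : ℕ → ℚ) : Matrix (Fin μ) (Fin μ) ℂ :=
  Matrix.diagonal fun k : Fin μ =>
    if (k : ℕ) ≤ n then 0 else -((s (μ + n - (k : ℕ)) : ℚ) : ℂ) / (μ : ℂ)

/-! `Ā_0^ψ` is a weighted cyclic shift with the step `n → n + 1` removed, i.e. a weighted path
`n + 1 → ⋯ → μ - 1 → 0 → ⋯ → n`. Ordering the indices along this path makes
`R^ψ - c • Ā_0^ψ` triangular for every `c`, so its eigenvalues are the diagonal entries of `R^ψ`;
these lie in `(-1, 0]` because every element `ℓμ/w_i` of `S_w` lies in `[0, μ)`. -/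

theorem Matrix.BlockTriangular.charpoly_eq_prod_of_injective {m R α : Type*} [Fintype m]
    [DecidableEq m] [CommRing R] [LinearOrder α] {M : Matrix m m R} {b : m → α}
    (hM : M.BlockTriangular b) (hb : Function.Injective b) :
    M.charpoly = ∏ i, (X - C (M i i)) := by
  let _ : LinearOrder m := LinearOrder.lift' b hb
  exact charpoly_of_isUpperTriangular M hM

theorem mem_Ico_of_mem_bind_map_range {ι : Type*} {I : Multiset ι} {w : ι → ℕ} {a x : ℚ}
    (ha : 0 < a)
    (hx : x ∈ I.bind fun i => (Multiset.range (w i)).map fun ℓ => (ℓ : ℚ) * a / w i) :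
    x ∈ Set.Ico 0 a := by
  obtain ⟨i, -, hi⟩ := Multiset.mem_bind.mp hx
  obtain ⟨ℓ, hℓ, rfl⟩ := Multiset.mem_map.mp hi
  simp only [Multiset.pure_def, Multiset.bind_def, Multiset.bind_singleton, Multiset.mem_map,
    Multiset.mem_range] at hℓ
  obtain ⟨ℓ, hℓw, rfl⟩ := hℓ
  have hℓw : (ℓ : ℚ) < w i := by exact_mod_cast hℓw
  have hw : (0 : ℚ) < w i := (Nat.cast_nonneg ℓ).trans_lt hℓw
  refine ⟨by positivity, ?_⟩
  rw [div_lt_iff₀ hw, mul_comm]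
  exact mul_lt_mul_of_pos_left hℓw ha

section

variable {μ n : ℕ}

/-- Ranks the indices backwards along the path `n + 1 → ⋯ → μ - 1 → 0 → ⋯ → n`. -/
def psiOrder (μ n : ℕ) (k : Fin μ) : ℕ :=
  if (k : ℕ) ≤ n then n - k else μ + n - k

theorem psiOrder_injective : Function.Injective (psiOrder μ n) := by
  intro i j h
  have := i.isLt
  have := j.isLt
  simp only [psiOrder] at h
  ext
  split_ifs at h <;> omega

theorem blockTriangular_A0psibar (hμn : n + 2 ≤ μ) :
    (A0psibar μ n).BlockTriangular (psiOrder μ n) := by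
  intro i j h
  have := i.isLt
  have := j.isLt
  simp only [psiOrder] at h
  simp only [A0psibar, of_apply]
  rw [if_neg (by split_ifs at h <;> omega), if_neg (by split_ifs at h <;> omega)]

theorem A0psibar_apply_self (hμ : 2 ≤ μ) (k : Fin μ) : A0psibar μ n k k = 0 := by
  have := k.isLt
  simp only [A0psibar, of_apply]
  rw [if_neg (by omega), if_neg (by omega)]

theorem charpoly_Rpsi_sub_smul_A0psibar (hμn : n + 2 ≤ μ) (s : ℕ → ℚ) (c : ℂ) :
    (Rpsi μ n s - c • A0psibar μ n).charpoly = ∏ k, (X - C (Rpsi μ n s k k)) := by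
  have hM : (Rpsi μ n s - c • A0psibar μ n).BlockTriangular (psiOrder μ n) :=
    (blockTriangular_diagonal _).sub fun i j h => by simp [blockTriangular_A0psibar hμn h]
  have hA : ∀ k, A0psibar μ n k k = 0 := A0psibar_apply_self (by omega)
  simp [hM.charpoly_eq_prod_of_injective psiOrder_injective, hA]

theorem prod_X_sub_C_Rpsi_apply_self (hμn : n + 1 ≤ μ) (s : ℕ → ℚ) :
    ∏ k, (X - C (Rpsi μ n s k k)) =
      X ^ (n + 1) * ∏ k ∈ Ico (n + 1) μ, (X - C (-((s (μ + n - k) : ℚ) : ℂ) / (μ : ℂ))) := by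
  let f : ℕ → ℂ[X] := fun k => X - C (if k ≤ n then 0 else -((s (μ + n - k) : ℚ) : ℂ) / μ)
  calc ∏ k, (X - C (Rpsi μ n s k k)) = ∏ k ∈ range μ, f k := by
        simp only [Rpsi, diagonal_apply_eq]
        exact Fin.prod_univ_eq_prod_range f μ
    _ = _ := by
        rw [← prod_range_mul_prod_Ico f hμn]
        congr 1
        · rw [prod_congr rfl fun k hk => show f k = X by
            simp [f, Nat.le_of_lt_succ (mem_range.mp hk)], prod_const, card_range]
        · exact prod_congr rfl fun k hk => by
            simp [f, Nat.not_le_of_lt (mem_Ico.mp hk).1]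

theorem Rpsi_apply_self_mem_Ioc (s : ℕ → ℚ) (hs : ∀ m < μ, s m ∈ Set.Ico 0 (μ : ℚ))
    (k : Fin μ) :
    ∃ r : ℝ, Rpsi μ n s k k = r ∧ -1 < r ∧ r ≤ 0 := by
  by_cases hk : (k : ℕ) ≤ n
  · exact ⟨0, by simp [Rpsi, hk], by norm_num, le_rfl⟩
  obtain ⟨hs0, hsμ⟩ := hs (μ + n - k) (by omega)
  have hμ : (0 : ℚ) < μ := by exact_mod_cast k.pos
  refine ⟨((-s (μ + n - k) / μ : ℚ) : ℝ), by simp [Rpsi, hk], ?_, ?_⟩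
  · exact_mod_cast show -1 < -s (μ + n - k) / μ by
      rw [neg_div, neg_lt_neg_iff, div_lt_one hμ]; exact hsμ
  · exact_mod_cast show -s (μ + n - k) / μ ≤ 0 from
      div_nonpos_of_nonpos_of_nonneg (neg_nonpos.mpr hs0) hμ.le

end

theorem stmt_6_general (n : ℕ) (w : ℕ → ℕ) (μ : ℕ) (hμn : n + 2 ≤ μ) (s : ℕ → ℚ)
    (hmult : (Multiset.range μ).map s =
      (Finset.range (n + 1)).val.bind fun i =>
        (Multiset.range (w i)).map fun ℓ => (ℓ : ℚ) * μ / (w i))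
    (θ : ℂ) :
    (Rpsi μ n s - ((μ : ℂ) * θ)⁻¹ • A0psibar μ n).charpoly
      = X ^ (n + 1) *
        ∏ k ∈ Finset.Ico (n + 1) μ, (X - C (-((s (μ + n - k) : ℚ) : ℂ) / (μ : ℂ))) ∧
    ∀ lam ∈ spectrum ℂ (Rpsi μ n s - ((μ : ℂ) * θ)⁻¹ • A0psibar μ n),
      ∃ r : ℝ, lam = (r : ℂ) ∧ -1 < r ∧ r ≤ 0 := by
  have hs : ∀ m < μ, s m ∈ Set.Ico 0 (μ : ℚ) := fun m hm =>
    mem_Ico_of_mem_bind_map_range (by exact_mod_cast (by omega : 0 < μ))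
      (hmult ▸ Multiset.mem_map_of_mem s (Multiset.mem_range.mpr hm))
  have hchar := charpoly_Rpsi_sub_smul_A0psibar hμn s ((μ : ℂ) * θ)⁻¹
  refine ⟨hchar.trans (prod_X_sub_C_Rpsi_apply_self (by omega) s), fun lam hlam => ?_⟩
  rw [mem_spectrum_iff_isRoot_charpoly, hchar, IsRoot, eval_prod, prod_eq_zero_iff] at hlam
  obtain ⟨k, -, hk⟩ := hlam
  rw [eval_sub, eval_X, eval_C, sub_eq_zero] at hk
  obtain ⟨r, hr, hr_mem⟩ := Rpsi_apply_self_mem_Ioc s hs k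
  exact ⟨r, hk.trans hr, hr_mem⟩

/-- assume `μ ≥ n+2`. For every `θ ≠ 0`, the characteristic polynomial of
`R^ψ − (1/(μθ))·Ā_0^ψ` is `X^{n+1}·∏_{k=n+1}^{μ−1}(X + s_{μ+n−k}/μ)` (so its eigenvalues
are `0` with multiplicity `n+1` and the `−s_{μ+n−k}/μ`), and every eigenvalue is a
real number `λ` with `−1 < λ ≤ 0`. -/
theorem stmt_6 (n : ℕ) (hn : 1 ≤ n) (w : ℕ → ℕ) (hw0 : w 0 = 1)
    (hwpos : ∀ i ∈ Finset.Icc 1 n, 1 ≤ w i)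
    (μ : ℕ) (hμ : μ = 1 + ∑ i ∈ Finset.Icc 1 n, w i)
    (hμn : n + 2 ≤ μ)
    (s : ℕ → ℚ) (hmono : ∀ k, k + 1 < μ → s k ≤ s (k + 1))
    (hmult : (Multiset.range μ).map s =
      (Finset.range (n + 1)).val.bind fun i =>
        (Multiset.range (w i)).map fun ℓ => (ℓ : ℚ) * μ / (w i))
    (θ : ℂ) (hθ : θ ≠ 0) :
    (Rpsi μ n s - ((μ : ℂ) * θ)⁻¹ • A0psibar μ n).charpoly
      = X ^ (n + 1) *
        ∏ k ∈ Finset.Ico (n + 1) μ, (X - C (-((s (μ + n - k) : ℚ) : ℂ) / (μ : ℂ))) ∧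
    ∀ lam ∈ spectrum ℂ (Rpsi μ n s - ((μ : ℂ) * θ)⁻¹ • A0psibar μ n),
      ∃ r : ℝ, lam = (r : ℂ) ∧ -1 < r ∧ r ≤ 0 :=
  stmt_6_general n w μ hμn s hmult θ
end
end

section
/- For real x ∈ (0,1], define x^R = diag(x^{R_{0,0}}, …, x^{R_{μ−1,μ−1}}) using real powers, and set A_0^{flat}(x) = x^R A_0(x) x^{−R}. Then every entry of A_0^{flat}(x) converges to a finite limit as x → 0⁺ (so the matrix-valued map x ↦ A_0^{flat}(x) extends continuously to x = 0); this holds because the sequence (s_k) is nondecreasing. -/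
/-!
Entry `(i, j)` of `x^R A_0(x) x^{-R}` is `x^{R_i - R_j} A_0(x)_{ij}`, so every nonzero entry is a
constant times `x^e`, and it converges as `x → 0⁺` as soon as `e ≥ 0`. The elements of `S_w` lie
in `[0, μ]`, hence `-1 ≤ R_k ≤ 0`: this gives `e ≥ 0` for the corner entry `(0, μ-1)` and for the
entry `(1, 0)`, which carries the extra factor `x`. On the rest of the subdiagonal
`e = R_{k+1} - R_k ≥ 0`, since `R` is nondecreasing on `1, …, μ-1` because `(s_k)` is.
-/

open Finset Matrix Real

noncomputable section

/-- The real matrix `A_0(x)`: `A_0(x)_{1,0} = μx`, `A_0(x)_{k+1,k} = μ` for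
`1 ≤ k ≤ μ−2`, `A_0(x)_{0,μ−1} = μ`, all other entries `0`. -/
def A0R (μ : ℕ) (x : ℝ) : Matrix (Fin μ) (Fin μ) ℝ :=
  Matrix.of fun i j =>
    if (i : ℕ) = (j : ℕ) + 1 then (if (j : ℕ) = 0 then (μ : ℝ) * x else (μ : ℝ))
    else if (i : ℕ) = 0 ∧ (j : ℕ) = μ - 1 then (μ : ℝ) else 0

/-- The diagonal entries of `R`: `R_{0,0} = 0`, `R_{k,k} = −1` for `1 ≤ k ≤ n`, and
`R_{k,k} = −s_{μ+n−k}/μ` for `n+1 ≤ k ≤ μ−1`. -/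
def rdiag (μ n : ℕ) (s : ℕ → ℚ) : Fin μ → ℝ := fun k =>
  if (k : ℕ) = 0 then 0
  else if (k : ℕ) ≤ n then -1
  else -((s (μ + n - (k : ℕ)) : ℚ) : ℝ) / (μ : ℝ)

/-- `A_0^{flat}(x) = x^R A_0(x) x^{−R}` for real `x > 0`, where
`x^R = diag(x^{R_{0,0}}, …, x^{R_{μ−1,μ−1}})` (real powers). -/
def A0flat (μ n : ℕ) (s : ℕ → ℚ) (x : ℝ) : Matrix (Fin μ) (Fin μ) ℝ :=
  Matrix.diagonal (fun k : Fin μ => x ^ (rdiag μ n s k)) * A0R μ x *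
    Matrix.diagonal (fun k : Fin μ => x ^ (-(rdiag μ n s k)))

open Filter Topology Set

lemma exists_tendsto_of_eqOn_mul_rpow {f : ℝ → ℝ} {c e : ℝ} (he : 0 ≤ e)
    (hf : EqOn f (fun x => c * x ^ e) (Ioi 0)) :
    ∃ L, Tendsto f (𝓝[>] 0) (𝓝 L) :=
  ⟨c * 0 ^ e, (((continuousAt_rpow_const 0 e (Or.inr he)).tendsto.mono_left
    nhdsWithin_le_nhds).const_mul c).congr' (eventuallyEq_nhdsWithin_of_eqOn hf).symm⟩

lemma diagonal_rpow_mul_mul_diagonal_rpow_neg_apply {ι : Type*} [Fintype ι] [DecidableEq ι]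
    (r : ι → ℝ) (M : Matrix ι ι ℝ) {x : ℝ} (hx : 0 < x) (i j : ι) :
    (diagonal (fun k => x ^ r k) * M * diagonal (fun k => x ^ (-r k))) i j =
      x ^ (r i - r j) * M i j := by
  rw [mul_diagonal, diagonal_mul, rpow_sub hx, rpow_neg hx.le]
  ring

lemma mem_Icc_of_mem_bind_map_range {ι : Type*} {I : Multiset ι} {w : ι → ℕ} {c q : ℚ}
    (hc : 0 ≤ c)
    (hq : q ∈ I.bind fun i => (Multiset.range (w i)).map fun ℓ => (ℓ : ℚ) * c / w i) :
    q ∈ Icc 0 c := by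
  obtain ⟨i, -, hq⟩ := Multiset.mem_bind.1 hq
  -- `ℓ` elaborates as a rational: `range (w i)` is coerced to `Multiset ℚ` through the monad.
  obtain ⟨_, hmem, rfl⟩ := Multiset.mem_map.1 hq
  obtain ⟨ℓ, hℓ, rfl⟩ : ∃ ℓ < w i, (ℓ : ℚ) = _ := by simpa using hmem
  have hℓw : (ℓ : ℚ) < w i := by exact_mod_cast hℓ
  have hw : (0 : ℚ) < w i := (Nat.cast_nonneg ℓ).trans_lt hℓw
  refine ⟨by positivity, ?_⟩
  rw [div_le_iff₀ hw]
  nlinarith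

section rdiag

variable {μ n : ℕ} {s : ℕ → ℚ}

lemma neg_one_le_rdiag (hs : ∀ k < μ, s k ∈ Icc 0 (μ : ℚ)) (k : Fin μ) :
    -1 ≤ rdiag μ n s k := by
  have hμ : (0 : ℝ) < μ := by exact_mod_cast k.pos
  unfold rdiag
  split_ifs
  · norm_num
  · rfl
  · rw [neg_div, neg_le_neg_iff, div_le_one hμ]
    exact_mod_cast (hs _ (by omega)).2

lemma rdiag_nonpos (hs : ∀ k < μ, s k ∈ Icc 0 (μ : ℚ)) (k : Fin μ) : rdiag μ n s k ≤ 0 := by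
  unfold rdiag
  split_ifs
  · rfl
  · norm_num
  · have : (0 : ℝ) ≤ s (μ + n - k) := by exact_mod_cast (hs _ (by omega)).1
    rw [neg_div, neg_nonpos]
    positivity

lemma rdiag_le_rdiag_of_succ (hmono : ∀ k, k + 1 < μ → s k ≤ s (k + 1))
    (hs : ∀ k < μ, s k ∈ Icc 0 (μ : ℚ)) {i j : Fin μ} (hij : (i : ℕ) = j + 1)
    (hj : (j : ℕ) ≠ 0) : rdiag μ n s j ≤ rdiag μ n s i := by
  by_cases hjn : (j : ℕ) ≤ n
  · calc rdiag μ n s j = -1 := by simp only [rdiag, if_neg hj, if_pos hjn]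
      _ ≤ rdiag μ n s i := neg_one_le_rdiag hs i
  · have hm := hmono (μ + n - i) (by omega)
    rw [show μ + n - i + 1 = μ + n - j by omega] at hm
    simp only [rdiag, if_neg hj, if_neg hjn, if_neg (show (i : ℕ) ≠ 0 by omega),
      if_neg (show ¬(i : ℕ) ≤ n by omega)]
    rw [neg_div, neg_div, neg_le_neg_iff]
    gcongr

lemma exists_A0flat_apply_eqOn_mul_rpow (hmono : ∀ k, k + 1 < μ → s k ≤ s (k + 1))
    (hs : ∀ k < μ, s k ∈ Icc 0 (μ : ℚ)) (i j : Fin μ) :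
    ∃ c e : ℝ, 0 ≤ e ∧ EqOn (fun x => A0flat μ n s x i j) (fun x => c * x ^ e) (Ioi 0) := by
  have hconj : ∀ x : ℝ, 0 < x →
      A0flat μ n s x i j = x ^ (rdiag μ n s i - rdiag μ n s j) * A0R μ x i j :=
    fun x hx => diagonal_rpow_mul_mul_diagonal_rpow_neg_apply _ _ hx i j
  by_cases hsub : (i : ℕ) = j + 1
  · by_cases hj : (j : ℕ) = 0
    · have hrj : rdiag μ n s j = 0 := if_pos hj
      refine ⟨μ, rdiag μ n s i + 1, by linarith [neg_one_le_rdiag (n := n) hs i],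
        fun x hx => ?_⟩
      simp only [hconj x hx, hrj, sub_zero, A0R, of_apply, if_pos hsub, if_pos hj,
        rpow_add_one (ne_of_gt hx)]
      ring
    · refine ⟨μ, rdiag μ n s i - rdiag μ n s j,
        sub_nonneg.2 (rdiag_le_rdiag_of_succ hmono hs hsub hj), fun x hx => ?_⟩
      simp only [hconj x hx, A0R, of_apply, if_pos hsub, if_neg hj]
      ring
  · by_cases hcorner : (i : ℕ) = 0 ∧ (j : ℕ) = μ - 1
    · have hri : rdiag μ n s i = 0 := if_pos hcorner.1
      refine ⟨μ, -rdiag μ n s j, neg_nonneg.2 (rdiag_nonpos hs j), fun x hx => ?_⟩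
      simp only [hconj x hx, hri, zero_sub, A0R, of_apply, if_neg hsub, if_pos hcorner]
      ring
    · refine ⟨0, 0, le_rfl, fun x hx => ?_⟩
      simp only [hconj x hx, A0R, of_apply, if_neg hsub, if_neg hcorner, mul_zero, zero_mul]

end rdiag

theorem stmt_7_general (n : ℕ) (w : ℕ → ℕ) (μ : ℕ)
    (s : ℕ → ℚ) (hmono : ∀ k, k + 1 < μ → s k ≤ s (k + 1))
    (hmult : (Multiset.range μ).map s =
      (Finset.range (n + 1)).val.bind fun i =>
        (Multiset.range (w i)).map fun ℓ => (ℓ : ℚ) * μ / (w i)) :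
    ∀ i j : Fin μ, ∃ L : ℝ,
      Filter.Tendsto (fun x : ℝ => A0flat μ n s x i j)
        (nhdsWithin 0 (Set.Ioi 0)) (nhds L) := by
  have hs : ∀ k < μ, s k ∈ Icc 0 (μ : ℚ) := fun k hk =>
    mem_Icc_of_mem_bind_map_range (Nat.cast_nonneg μ)
      (hmult ▸ Multiset.mem_map_of_mem s (Multiset.mem_range.2 hk))
  intro i j
  obtain ⟨c, e, he, hf⟩ := exists_A0flat_apply_eqOn_mul_rpow hmono hs i j
  exact exists_tendsto_of_eqOn_mul_rpow he hf

/-- every entry of `A_0^{flat}(x)` converges to a finite limit as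
`x → 0⁺`. -/
theorem stmt_7 (n : ℕ) (hn : 1 ≤ n) (w : ℕ → ℕ) (hw0 : w 0 = 1)
    (hwpos : ∀ i ∈ Finset.Icc 1 n, 1 ≤ w i)
    (μ : ℕ) (hμ : μ = 1 + ∑ i ∈ Finset.Icc 1 n, w i)
    (s : ℕ → ℚ) (hmono : ∀ k, k + 1 < μ → s k ≤ s (k + 1))
    (hmult : (Multiset.range μ).map s =
      (Finset.range (n + 1)).val.bind fun i =>
        (Multiset.range (w i)).map fun ℓ => (ℓ : ℚ) * μ / (w i)) :
    ∀ i j : Fin μ, ∃ L : ℝ,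
      Filter.Tendsto (fun x : ℝ => A0flat μ n s x i j)
        (nhdsWithin 0 (Set.Ioi 0)) (nhds L) :=
  stmt_7_general n w μ s hmono hmult
end
end

section
/- The tuple (ℂ^μ, [A_0], A_∞, G) is a Frobenius type structure on a point; concretely: G is symmetric and invertible, [A_0]ᵀ G = G [A_0] (i.e. [A_0] is self-adjoint with respect to G), and A_∞ᵀ G + G A_∞ = n·G (i.e. A_∞ + A_∞* = n·Id with respect to G). -/
/-!
`G` is the permutation matrix of the involution `k ↦ (n - k) mod μ` of `Fin μ`, so it is symmetric
and invertible, and the two adjointness identities reduce to the entrywise symmetries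
`[A_0]_{σ i, j} = [A_0]_{σ j, i}` and `α_k + α_{σ k} = n` under this involution `σ`. Both come from
the shape of the sorted spectrum: every block `{ℓμ/w_i}` contains exactly one zero and its nonzero
part is invariant under `x ↦ μ - x`. Hence `s_0 = ⋯ = s_n = 0 < s_{n+1}`, and since a sorted
sequence is determined by its multiset, `s_k + s_{μ+n-k} = μ` for `k > n`.
-/

open Finset Matrix

noncomputable section

/-- The matrix `[A_0]`: `([A_0])_{k+1,k} = μ` when `s_{k+1} = s_k` (for `0 ≤ k ≤ μ−2`),
all other entries `0`. -/
def A0lim (μ : ℕ) (s : ℕ → ℚ) : Matrix (Fin μ) (Fin μ) ℂ :=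
  Matrix.of fun i j =>
    if (i : ℕ) = (j : ℕ) + 1 ∧ s ((j : ℕ) + 1) = s (j : ℕ) then (μ : ℂ) else 0

/-- The symmetric matrix `G`: `G_{k,n−k} = 1` for `0 ≤ k ≤ n`, `G_{k,μ+n−k} = 1` for
`n+1 ≤ k ≤ μ−1`, all other entries `0`. -/
def Gmat (μ n : ℕ) : Matrix (Fin μ) (Fin μ) ℂ :=
  Matrix.of fun i j =>
    if (i : ℕ) + (j : ℕ) = n ∨ (i : ℕ) + (j : ℕ) = μ + n then 1 else 0

section SortedSequences

variable {α : Type*} [LinearOrder α] {f g : ℕ → α} {m : ℕ}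

theorem List.pairwise_le_map_range_of_monotoneOn (hf : MonotoneOn f (Set.Iio m)) :
    ((List.range m).map f).Pairwise (· ≤ ·) := by
  rw [List.pairwise_map]
  exact List.pairwise_lt_range.imp_of_mem fun ha hb hab =>
    hf (List.mem_range.mp ha) (List.mem_range.mp hb) hab.le

theorem MonotoneOn.eqOn_of_map_range_eq (hf : MonotoneOn f (Set.Iio m))
    (hg : MonotoneOn g (Set.Iio m)) (h : (Multiset.range m).map f = (Multiset.range m).map g) :
    Set.EqOn f g (Set.Iio m) := by
  have hperm : ((List.range m).map f).Perm ((List.range m).map g) := Multiset.coe_eq_coe.mp h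
  have hlist := hperm.eq_of_pairwise' (List.pairwise_le_map_range_of_monotoneOn hf)
    (List.pairwise_le_map_range_of_monotoneOn hg)
  intro k hk
  simpa [Set.mem_Iio.mp hk] using congrArg (·[k]?) hlist

end SortedSequences

/-- For `n < m` and `k < m` this is `(n - k) mod m`. -/
def mirror (m n k : ℕ) : ℕ := if k ≤ n then n - k else m + n - k

section Mirror

variable {m n k : ℕ}

theorem mirror_lt (h : n < m) (hk : k < m) : mirror m n k < m := by
  unfold mirror; split <;> omega

theorem mirror_mirror (h : n < m) (hk : k < m) : mirror m n (mirror m n k) = k := by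
  unfold mirror; split_ifs <;> omega

theorem mirror_eq_iff {j : ℕ} (hk : k < m) (hj : j < m) :
    mirror m n k = j ↔ k + j = n ∨ k + j = m + n := by
  unfold mirror; split <;> omega

theorem map_mirror_range (h : n < m) :
    (Multiset.range m).map (mirror m n) = Multiset.range m := by
  simpa using Multiset.map_eq_map_of_bij_of_nodup (mirror m n) id (Multiset.nodup_range m)
    (Multiset.nodup_range m) (fun k _ => mirror m n k)
    (fun k hk => Multiset.mem_range.mpr (mirror_lt h (Multiset.mem_range.mp hk)))
    (fun a ha b hb hab => by
      simpa [mirror_mirror h (Multiset.mem_range.mp ha), mirror_mirror h (Multiset.mem_range.mp hb)]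
        using congrArg (mirror m n) hab)
    (fun b hb => ⟨mirror m n b, Multiset.mem_range.mpr (mirror_lt h (Multiset.mem_range.mp hb)),
      mirror_mirror h (Multiset.mem_range.mp hb)⟩)
    (fun _ _ => rfl)

def mirrorPerm (h : n < m) : Equiv.Perm (Fin m) :=
  Function.Involutive.toPerm (fun k => ⟨mirror m n k, mirror_lt h k.isLt⟩)
    fun k => Fin.ext (mirror_mirror h k.isLt)

theorem mirrorPerm_val (h : n < m) (k : Fin m) : (mirrorPerm h k : ℕ) = mirror m n k := rfl

theorem involutive_mirrorPerm (h : n < m) : Function.Involutive (mirrorPerm h) :=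
  fun k => Fin.ext (mirror_mirror h k.isLt)

end Mirror

def reflectNonzero {K : Type*} [Zero K] [Sub K] [DecidableEq K] (c x : K) : K :=
  if x = 0 then 0 else c - x

section WeightSpectrum

variable {K ι : Type*} [Field K] [LinearOrder K] [IsStrictOrderedRing K]

def weightBlock (c : K) (w : ℕ) : Multiset K :=
  (Multiset.range w).map fun ℓ : ℕ => (ℓ : K) * c / w

def weightSpectrum (c : K) (t : Finset ι) (w : ι → ℕ) : Multiset K :=
  t.val.bind fun i => weightBlock c (w i)

theorem count_zero_weightBlock {c : K} (hc : c ≠ 0) {w : ℕ} (hw : 0 < w) :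
    (weightBlock c w).count 0 = 1 := by
  have hw' : (w : K) ≠ 0 := by positivity
  have hinj : Function.Injective fun ℓ : ℕ => (ℓ : K) * c / w := fun a b hab => by
    simpa [hc, hw'] using hab
  have := Multiset.count_map_eq_count' _ (Multiset.range w) hinj 0
  simp_all [weightBlock, Multiset.count_eq_one_of_mem (Multiset.nodup_range w)]

theorem nonneg_and_le_of_mem_weightBlock {c x : K} (hc : 0 ≤ c) {w : ℕ}
    (hx : x ∈ weightBlock c w) : 0 ≤ x ∧ x ≤ c := by
  obtain ⟨ℓ, hℓ, rfl⟩ := Multiset.mem_map.mp hx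
  have hℓw : ℓ < w := Multiset.mem_range.mp hℓ
  have hw : (0 : K) < w := by exact_mod_cast (Nat.zero_le ℓ).trans_lt hℓw
  refine ⟨by positivity, (div_le_iff₀ hw).mpr ?_⟩
  rw [mul_comm c]
  exact mul_le_mul_of_nonneg_right (by exact_mod_cast hℓw.le) hc

/-- The reflection `x ↦ c - x` of the nonzero points `ℓc/w` is `ℓ ↦ w - ℓ`, i.e. `mirror w 0`. -/
theorem map_reflectNonzero_weightBlock (c : K) (w : ℕ) :
    (weightBlock c w).map (reflectNonzero c) = weightBlock c w := by
  rcases Nat.eq_zero_or_pos w with rfl | hw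
  · simp [weightBlock]
  have hrefl : ∀ ℓ ∈ Multiset.range w,
      reflectNonzero c ((ℓ : K) * c / w) = ((mirror w 0 ℓ : ℕ) : K) * c / w := by
    intro ℓ hℓ
    have hℓw : ℓ < w := Multiset.mem_range.mp hℓ
    have hw' : (w : K) ≠ 0 := by positivity
    unfold reflectNonzero mirror
    rcases Nat.eq_zero_or_pos ℓ with rfl | hℓ0
    · simp
    by_cases hc : c = 0
    · simp [hc]
    have hℓ' : (ℓ : K) ≠ 0 := by positivity
    rw [if_neg (by simp [hc, hw', hℓ']), if_neg (by omega), Nat.add_zero, Nat.cast_sub hℓw.le]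
    field_simp
  calc (weightBlock c w).map (reflectNonzero c)
      = (Multiset.range w).map fun ℓ => ((mirror w 0 ℓ : ℕ) : K) * c / w := by
        rw [weightBlock, Multiset.map_map]
        exact Multiset.map_congr rfl hrefl
    _ = ((Multiset.range w).map (mirror w 0)).map fun ℓ : ℕ => (ℓ : K) * c / w :=
        (Multiset.map_map (fun ℓ : ℕ => (ℓ : K) * c / w) (mirror w 0) _).symm
    _ = weightBlock c w := by rw [map_mirror_range hw, weightBlock]

theorem count_zero_weightSpectrum {c : K} (hc : c ≠ 0) {t : Finset ι} {w : ι → ℕ}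
    (hw : ∀ i ∈ t, 0 < w i) : (weightSpectrum c t w).count 0 = t.card := by
  rw [weightSpectrum, Multiset.count_bind, Multiset.map_congr rfl fun i hi =>
    count_zero_weightBlock hc (hw i hi)]
  simp

theorem nonneg_and_le_of_mem_weightSpectrum {c x : K} (hc : 0 ≤ c) {t : Finset ι} {w : ι → ℕ}
    (hx : x ∈ weightSpectrum c t w) : 0 ≤ x ∧ x ≤ c := by
  obtain ⟨i, -, hxi⟩ := Multiset.mem_bind.mp hx
  exact nonneg_and_le_of_mem_weightBlock hc hxi

theorem map_reflectNonzero_weightSpectrum (c : K) (t : Finset ι) (w : ι → ℕ) :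
    (weightSpectrum c t w).map (reflectNonzero c) = weightSpectrum c t w := by
  rw [weightSpectrum, Multiset.map_bind]
  exact Multiset.bind_congr fun i _ => map_reflectNonzero_weightBlock c (w i)

end WeightSpectrum

section MirrorSymmetric

variable {K : Type*} {m n : ℕ} {s : ℕ → K}

theorem eq_zero_iff_le_of_count_zero [Zero K] [LinearOrder K] (hs : MonotoneOn s (Set.Iio m))
    (hnonneg : ∀ k < m, 0 ≤ s k) (hcount : ((Multiset.range m).map s).count 0 = n + 1)
    {k : ℕ} (hk : k < m) : s k = 0 ↔ k ≤ n := by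
  set Z := (Finset.range m).filter fun j => s j = 0
  have hZ : Z.card = n + 1 := by
    rw [← hcount, Multiset.count_map]
    simp [Z, Finset.card_def, eq_comm]
  constructor
  · intro hk0
    by_contra! hnk
    have hsub : Finset.range (k + 1) ⊆ Z := fun j hj => by
      have hjk : j ≤ k := Nat.lt_succ_iff.mp (Finset.mem_range.mp hj)
      refine Finset.mem_filter.mpr ⟨Finset.mem_range.mpr (by omega), ?_⟩
      exact le_antisymm (hk0 ▸ hs (hjk.trans_lt hk) hk hjk) (hnonneg j (by omega))
    have := Finset.card_le_card hsub
    simp only [Finset.card_range] at this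
    omega
  · intro hkn
    by_contra hk0
    have hpos : 0 < s k := (hnonneg k hk).lt_of_ne (Ne.symm hk0)
    have hsub : Z ⊆ Finset.range k := fun j hj => by
      obtain ⟨hjm, hj0⟩ := Finset.mem_filter.mp hj
      refine Finset.mem_range.mpr (lt_of_not_ge fun hkj => ?_)
      exact hpos.not_ge (hj0 ▸ hs hk (Finset.mem_range.mp hjm) hkj)
    have := Finset.card_le_card hsub
    simp only [Finset.card_range] at this
    omega

structure MirrorSymmetric [Zero K] [Sub K] (m n : ℕ) (c : K) (s : ℕ → K) : Prop where
  eq_zero_iff : ∀ k < m, s k = 0 ↔ k ≤ n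
  apply_mirror : ∀ k < m, n < k → s (mirror m n k) = c - s k

/-- Compare `s` with the sorted sequence `reflectNonzero c ∘ s ∘ mirror m n`, which has the same
multiset. -/
theorem mirrorSymmetric_of_map_reflectNonzero [AddCommGroup K] [LinearOrder K]
    [IsOrderedAddMonoid K] {c : K} (hs : MonotoneOn s (Set.Iio m))
    (hbound : ∀ k < m, 0 ≤ s k ∧ s k ≤ c)
    (hcount : ((Multiset.range m).map s).count 0 = n + 1)
    (hrefl : ((Multiset.range m).map s).map (reflectNonzero c) = (Multiset.range m).map s) :
    MirrorSymmetric m n c s := by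
  have hzero : ∀ k < m, s k = 0 ↔ k ≤ n := fun k hk =>
    eq_zero_iff_le_of_count_zero hs (fun j hj => (hbound j hj).1) hcount hk
  refine ⟨hzero, fun k hk hnk => ?_⟩
  have hnm : n < m := hnk.trans hk
  set r : ℕ → K := fun j => reflectNonzero c (s (mirror m n j))
  have hr_low : ∀ j ≤ n, r j = 0 := fun j hj => by
    have : s (mirror m n j) = 0 :=
      (hzero _ (mirror_lt hnm (by omega))).mpr (by unfold mirror; split <;> omega)
    simp [r, reflectNonzero, this]
  have hr_high : ∀ j < m, n < j → r j = c - s (mirror m n j) := fun j hj hnj => by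
    have : s (mirror m n j) ≠ 0 :=
      (hzero _ (mirror_lt hnm hj)).not.mpr (by unfold mirror; split <;> omega)
    simp [r, reflectNonzero, this]
  have hr_mono : MonotoneOn r (Set.Iio m) :=
    monotoneOn_of_le_add_one Set.ordConnected_Iio fun j _ _ hj1 => by
      have hj1 : j + 1 < m := hj1
      rcases lt_trichotomy j n with hjn | rfl | hnj
      · rw [hr_low j hjn.le, hr_low (j + 1) hjn]
      · rw [hr_low j le_rfl, hr_high (j + 1) hj1 (by omega)]
        exact sub_nonneg.mpr (hbound _ (mirror_lt hnm hj1)).2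
      · rw [hr_high j (by omega) hnj, hr_high (j + 1) hj1 (by omega)]
        exact sub_le_sub_left (hs (mirror_lt hnm hj1) (mirror_lt hnm (by omega))
          (by unfold mirror; split_ifs <;> omega)) c
  have hr_map : (Multiset.range m).map r = (Multiset.range m).map s := by
    calc (Multiset.range m).map r
        = ((Multiset.range m).map (mirror m n)).map (reflectNonzero c ∘ s) := by
          rw [Multiset.map_map]; rfl
      _ = (Multiset.range m).map s := by
          rw [map_mirror_range hnm, ← hrefl, Multiset.map_map]
  have hrk : r k = s k := hr_mono.eqOn_of_map_range_eq hs hr_map hk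
  rw [hr_high k hk hnk] at hrk
  rw [← hrk, sub_sub_cancel]

theorem MirrorSymmetric.mirror_eq_succ [Zero K] [Sub K] {c : K} (hS : MirrorSymmetric m n c s)
    (h : n < m) {i j : ℕ} (hi : i < m) (hj : j < m) (hij : mirror m n i = j + 1)
    (hsj : s (j + 1) = s j) :
    mirror m n j = i + 1 ∧ s (i + 1) = s i := by
  unfold mirror at hij
  rcases lt_trichotomy i n with hin | rfl | hni
  · rw [if_pos hin.le] at hij
    refine ⟨by unfold mirror; rw [if_pos (by omega)]; omega, ?_⟩
    rw [(hS.eq_zero_iff (i + 1) (by omega)).mpr (by omega), (hS.eq_zero_iff i hi).mpr hin.le]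
  · simp at hij
  · rw [if_neg (by omega)] at hij
    have hnj : n < j := by
      by_contra hjn
      obtain rfl : j = n := by omega
      have hsj0 : s (j + 1) = 0 := hsj.trans ((hS.eq_zero_iff j hj).mpr le_rfl)
      have := (hS.eq_zero_iff (j + 1) (by omega)).mp hsj0
      omega
    have hmj : mirror m n j = i + 1 := by unfold mirror; split_ifs <;> omega
    have hmj1 : mirror m n (j + 1) = i := by unfold mirror; split_ifs <;> omega
    refine ⟨hmj, ?_⟩
    rw [← hmj, ← hmj1, hS.apply_mirror j hj hnj, hS.apply_mirror (j + 1) (by omega) (by omega),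
      hsj]

end MirrorSymmetric

section PermMatrix

variable {ι R : Type*} [DecidableEq ι] {σ : Equiv.Perm ι}

theorem Matrix.transpose_permMatrix_of_involutive [Zero R] [One R] (hσ : Function.Involutive σ) :
    (σ.permMatrix R)ᵀ = σ.permMatrix R := by
  rw [transpose_permMatrix, inv_eq_of_mul_eq_one_right (Equiv.ext hσ)]

variable [Fintype ι]

theorem Matrix.isUnit_permMatrix [Semiring R] (σ : Equiv.Perm ι) :
    IsUnit (σ.permMatrix R) := by
  simpa using (Group.isUnit σ⁻¹).map (Matrix.permMatrixHom (n := ι) (R := R))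

variable [CommSemiring R]

theorem Matrix.transpose_mul_permMatrix_of_involutive (hσ : Function.Involutive σ)
    {A : Matrix ι ι R} (hA : ∀ i j, A (σ i) j = A (σ j) i) :
    Aᵀ * σ.permMatrix R = σ.permMatrix R * A := by
  conv_lhs => rw [← transpose_permMatrix_of_involutive hσ]
  rw [← transpose_mul, PEquiv.toMatrix_toPEquiv_mul]
  ext i j
  exact hA j i

theorem Matrix.diagonal_transpose_mul_permMatrix_add {d : ι → R} {c : R}
    (hd : ∀ i, d i + d (σ i) = c) :
    (diagonal d)ᵀ * σ.permMatrix R + σ.permMatrix R * diagonal d = c • σ.permMatrix R := by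
  ext i j
  simp only [diagonal_transpose, diagonal_mul, mul_diagonal, add_apply, smul_apply,
    PEquiv.toMatrix_apply, Equiv.toPEquiv_apply, Option.mem_def, Option.some.injEq]
  split_ifs with h
  · subst h
    simp [← hd i]
  · simp

end PermMatrix

theorem Gmat_eq_permMatrix {μ n : ℕ} (h : n < μ) : Gmat μ n = (mirrorPerm h).permMatrix ℂ := by
  ext i j
  simp only [Gmat, of_apply, PEquiv.toMatrix_apply, Equiv.toPEquiv_apply, Option.mem_def,
    Option.some.injEq, Fin.ext_iff, mirrorPerm_val, mirror_eq_iff i.isLt j.isLt]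

theorem A0lim_mirrorPerm_apply {μ n : ℕ} {s : ℕ → ℚ} (hS : MirrorSymmetric μ n (μ : ℚ) s)
    (h : n < μ) (i j : Fin μ) : A0lim μ s (mirrorPerm h i) j = A0lim μ s (mirrorPerm h j) i := by
  simp only [A0lim, of_apply, mirrorPerm_val]
  exact if_congr ⟨fun hij => hS.mirror_eq_succ h i.isLt j.isLt hij.1 hij.2,
    fun hji => hS.mirror_eq_succ h j.isLt i.isLt hji.1 hji.2⟩ rfl rfl

/-- The indices add up to `n` or `μ + n`, and the values of `s` to `0` or `μ` accordingly. -/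
theorem Ainf_diag_add_mirrorPerm {μ n : ℕ} {s : ℕ → ℚ} (hS : MirrorSymmetric μ n (μ : ℚ) s)
    (h : n < μ) (i : Fin μ) :
    ((i : ℕ) : ℂ) - ((s i : ℚ) : ℂ) + (((mirrorPerm h i : ℕ) : ℂ) - ((s (mirrorPerm h i)) : ℂ))
      = n := by
  rw [mirrorPerm_val]
  by_cases hin : (i : ℕ) ≤ n
  · have hidx : (i : ℕ) + mirror μ n i = n := by unfold mirror; split <;> omega
    rw [(hS.eq_zero_iff i i.isLt).mpr hin,
      (hS.eq_zero_iff _ (mirror_lt h i.isLt)).mpr (by unfold mirror; split <;> omega)]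
    have hcast := congrArg (Nat.cast : ℕ → ℂ) hidx
    push_cast at hcast ⊢
    linear_combination hcast
  · have hidx : (i : ℕ) + mirror μ n i = μ + n := by unfold mirror; split <;> omega
    rw [hS.apply_mirror i i.isLt (by omega)]
    have hcast := congrArg (Nat.cast : ℕ → ℂ) hidx
    push_cast at hcast ⊢
    linear_combination hcast

theorem stmt_10_general (n : ℕ) (w : ℕ → ℕ) (hw0 : w 0 = 1)
    (hwpos : ∀ i ∈ Finset.Icc 1 n, 1 ≤ w i)
    (μ : ℕ) (hμ : μ = 1 + ∑ i ∈ Finset.Icc 1 n, w i)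
    (s : ℕ → ℚ) (hmono : ∀ k, k + 1 < μ → s k ≤ s (k + 1))
    (hmult : (Multiset.range μ).map s =
      (Finset.range (n + 1)).val.bind fun i =>
        (Multiset.range (w i)).map fun ℓ => (ℓ : ℚ) * μ / (w i)) :
    (Gmat μ n)ᵀ = Gmat μ n ∧
    IsUnit (Gmat μ n) ∧
    (A0lim μ s)ᵀ * Gmat μ n = Gmat μ n * A0lim μ s ∧
    (Ainf μ s)ᵀ * Gmat μ n + Gmat μ n * Ainf μ s = (n : ℂ) • Gmat μ n := by
  replace hmult : (Multiset.range μ).map s = weightSpectrum (μ : ℚ) (Finset.range (n + 1)) w := by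
    rw [hmult]
    simp only [weightSpectrum, weightBlock, Multiset.pure_def, Multiset.bind_def,
      Multiset.bind_singleton, Multiset.map_map, Function.comp_def]
  have hw : ∀ i ∈ Finset.range (n + 1), 0 < w i := fun i hi => by
    rcases Nat.eq_zero_or_pos i with rfl | hi0
    · omega
    · exact hwpos i (Finset.mem_Icc.mpr ⟨hi0, Nat.lt_succ_iff.mp (Finset.mem_range.mp hi)⟩)
  have hcount : ((Multiset.range μ).map s).count 0 = n + 1 := by
    rw [hmult, count_zero_weightSpectrum (by rw [hμ]; positivity) hw, Finset.card_range]
  have hnμ : n < μ := by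
    simpa [hcount] using Multiset.count_le_card 0 ((Multiset.range μ).map s)
  have hS : MirrorSymmetric μ n (μ : ℚ) s :=
    mirrorSymmetric_of_map_reflectNonzero
      (monotoneOn_of_le_add_one Set.ordConnected_Iio fun k _ _ hk => hmono k hk)
      (fun k hk => nonneg_and_le_of_mem_weightSpectrum (Nat.cast_nonneg μ)
        (hmult ▸ Multiset.mem_map_of_mem s (Multiset.mem_range.mpr hk)))
      hcount (by rw [hmult, map_reflectNonzero_weightSpectrum])
  have hσ := involutive_mirrorPerm hnμ
  rw [Gmat_eq_permMatrix hnμ]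
  exact ⟨transpose_permMatrix_of_involutive hσ, isUnit_permMatrix _,
    transpose_mul_permMatrix_of_involutive hσ (A0lim_mirrorPerm_apply hS hnμ),
    diagonal_transpose_mul_permMatrix_add (Ainf_diag_add_mirrorPerm hS hnμ)⟩

/-- `(ℂ^μ, [A_0], A_∞, G)` is a Frobenius type structure on a point:
`G` is symmetric and invertible, `[A_0]` is `G`-self-adjoint, and
`A_∞ + A_∞^* = n·Id` with respect to `G`. -/
theorem stmt_10 (n : ℕ) (hn : 1 ≤ n) (w : ℕ → ℕ) (hw0 : w 0 = 1)
    (hwpos : ∀ i ∈ Finset.Icc 1 n, 1 ≤ w i)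
    (μ : ℕ) (hμ : μ = 1 + ∑ i ∈ Finset.Icc 1 n, w i)
    (s : ℕ → ℚ) (hmono : ∀ k, k + 1 < μ → s k ≤ s (k + 1))
    (hmult : (Multiset.range μ).map s =
      (Finset.range (n + 1)).val.bind fun i =>
        (Multiset.range (w i)).map fun ℓ => (ℓ : ℚ) * μ / (w i)) :
    (Gmat μ n)ᵀ = Gmat μ n ∧
    IsUnit (Gmat μ n) ∧
    (A0lim μ s)ᵀ * Gmat μ n = Gmat μ n * A0lim μ s ∧
    (Ainf μ s)ᵀ * Gmat μ n + Gmat μ n * Ainf μ s = (n : ℂ) • Gmat μ n :=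
  stmt_10_general n w hw0 hwpos μ hμ s hmono hmult
end
end

section
/- If μ ≥ n+2 then the matrix Ā_0^φ is not self-adjoint with respect to G, i.e. (Ā_0^φ)ᵀ G ≠ G Ā_0^φ; explicitly, (G Ā_0^φ)_{n,μ−1}-type entries fail: G applied to (Ā_0^φ e_n, e_{μ−1}) equals μ while G applied to (e_n, Ā_0^φ e_{μ−1}) equals 0. If μ = n+1 then Ā_0^φ = [A_0] and (Ā_0^φ)ᵀ G = G Ā_0^φ. (Hence the non-graded limit tuple is a Frobenius type structure if and only if μ = n+1.) -/
/-! `Ā_0^φ` is `μ` times the lower shift, so `(Ā_0^φ)ᵀ G` and `G Ā_0^φ` are `G` with its row,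
resp. column, index shifted by one. The anti-diagonal `i + j = n` of `G` is compatible with
this shift, the second one `i + j = μ + n` is not, and it is nonempty exactly when `μ ≥ n + 2`.
If `μ = n + 1` all weights are `1`, so every `s_k` is `0` and `[A_0]` keeps the whole
subdiagonal. -/

open Finset Matrix

noncomputable section

/-- The matrix `Ā_0^φ`: `(Ā_0^φ)_{k+1,k} = μ` for `0 ≤ k ≤ μ−2`, all other entries `0`. -/
def A0phibar (μ : ℕ) : Matrix (Fin μ) (Fin μ) ℂ :=
  Matrix.of fun i j => if (i : ℕ) = (j : ℕ) + 1 then (μ : ℂ) else 0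

theorem A0phibar_transpose_mul_apply {μ : ℕ} (M : Matrix (Fin μ) (Fin μ) ℂ) (i j : Fin μ) :
    ((A0phibar μ)ᵀ * M) i j = if h : (i : ℕ) + 1 < μ then μ * M ⟨i + 1, h⟩ j else 0 := by
  rw [mul_apply]
  split_ifs with h
  · rw [Finset.sum_eq_single ⟨i + 1, h⟩]
    · simp [A0phibar]
    · intro k _ hk
      simp only [A0phibar, transpose_apply, of_apply]
      rw [if_neg fun hk' => hk (Fin.ext hk'), zero_mul]
    · simp
  · refine Finset.sum_eq_zero fun k _ => ?_
    simp only [A0phibar, transpose_apply, of_apply]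
    rw [if_neg (by omega), zero_mul]

theorem mul_A0phibar_apply {μ : ℕ} (M : Matrix (Fin μ) (Fin μ) ℂ) (i j : Fin μ) :
    (M * A0phibar μ) i j = if h : (j : ℕ) + 1 < μ then M i ⟨j + 1, h⟩ * μ else 0 := by
  rw [mul_apply]
  split_ifs with h
  · rw [Finset.sum_eq_single ⟨j + 1, h⟩]
    · simp [A0phibar]
    · intro k _ hk
      simp only [A0phibar, of_apply]
      rw [if_neg fun hk' => hk (Fin.ext hk'), mul_zero]
    · simp
  · refine Finset.sum_eq_zero fun k _ => ?_
    simp only [A0phibar, of_apply]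
    rw [if_neg (by omega), mul_zero]

theorem A0phibar_transpose_mul_Gmat_apply_last {μ n : ℕ} (h : n + 2 ≤ μ) :
    ((A0phibar μ)ᵀ * Gmat μ n) ⟨n, by omega⟩ ⟨μ - 1, by omega⟩ = μ := by
  rw [A0phibar_transpose_mul_apply, dif_pos (show n + 1 < μ by omega)]
  simp only [Gmat, of_apply]
  rw [if_pos (Or.inr (by omega)), mul_one]

theorem Gmat_mul_A0phibar_apply_last {μ n : ℕ} (h : n + 2 ≤ μ) :
    (Gmat μ n * A0phibar μ) ⟨n, by omega⟩ ⟨μ - 1, by omega⟩ = 0 := by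
  rw [mul_A0phibar_apply, dif_neg (by simp; omega)]

theorem A0phibar_transpose_mul_Gmat_succ (n : ℕ) :
    (A0phibar (n + 1))ᵀ * Gmat (n + 1) n = Gmat (n + 1) n * A0phibar (n + 1) := by
  ext i j
  rw [A0phibar_transpose_mul_apply, mul_A0phibar_apply]
  have hi := i.isLt
  have hj := j.isLt
  simp only [Gmat, of_apply]
  split_ifs <;> first | (exfalso; omega) | ring

theorem A0lim_eq_A0phibar {μ : ℕ} {s : ℕ → ℚ} (hs : ∀ k, k + 1 < μ → s (k + 1) = s k) :
    A0lim μ s = A0phibar μ := by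
  ext i j
  simp only [A0lim, A0phibar, of_apply]
  refine if_congr ⟨And.left, fun hij => ⟨hij, hs j (hij ▸ i.isLt)⟩⟩ rfl rfl

theorem eq_one_of_sum_eq_card {ι : Type*} {t : Finset ι} {w : ι → ℕ}
    (hpos : ∀ i ∈ t, 1 ≤ w i) (hsum : ∑ i ∈ t, w i = #t) : ∀ i ∈ t, w i = 1 := by
  have := (Finset.sum_eq_sum_iff_of_le hpos).1 (by simpa using hsum.symm)
  exact fun i hi => (this i hi).symm

theorem weights_eq_one {n : ℕ} {w : ℕ → ℕ} (hw0 : w 0 = 1) (hwpos : ∀ i ∈ Icc 1 n, 1 ≤ w i)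
    (hsum : n + 1 = 1 + ∑ i ∈ Icc 1 n, w i) : ∀ i ∈ range (n + 1), w i = 1 := by
  intro i hi
  rcases Nat.eq_zero_or_pos i with rfl | hi0
  · exact hw0
  · refine eq_one_of_sum_eq_card hwpos ?_ i (mem_Icc.2 ⟨hi0, by simp at hi; omega⟩)
    rw [Nat.card_Icc]
    omega

theorem eq_zero_of_mem_bind_of_weights_eq_one {n μ : ℕ} {w : ℕ → ℕ}
    (hw : ∀ i ∈ range (n + 1), w i = 1) {x : ℚ}
    (hx : x ∈ (range (n + 1)).val.bind fun i =>
      (Multiset.range (w i)).map fun ℓ => (ℓ : ℚ) * μ / w i) : x = 0 := by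
  obtain ⟨i, hi, hxi⟩ := Multiset.mem_bind.1 hx
  rw [hw i hi] at hxi
  simpa [eq_comm] using hxi

/-- if `μ ≥ n+2` then `Ā_0^φ` is not `G`-self-adjoint; explicitly
`G(Ā_0^φ e_n, e_{μ−1}) = μ` while `G(e_n, Ā_0^φ e_{μ−1}) = 0`. If `μ = n+1` then
`Ā_0^φ = [A_0]` and `Ā_0^φ` is `G`-self-adjoint. -/
theorem stmt_11 (n : ℕ) (w : ℕ → ℕ) (hw0 : w 0 = 1)
    (hwpos : ∀ i ∈ Finset.Icc 1 n, 1 ≤ w i)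
    (μ : ℕ) (hμ : μ = 1 + ∑ i ∈ Finset.Icc 1 n, w i)
    (s : ℕ → ℚ)
    (hmult : (Multiset.range μ).map s =
      (Finset.range (n + 1)).val.bind fun i =>
        (Multiset.range (w i)).map fun ℓ => (ℓ : ℚ) * μ / (w i)) :
    (∀ h : n + 2 ≤ μ,
      ((A0phibar μ)ᵀ * Gmat μ n) ⟨n, by omega⟩ ⟨μ - 1, by omega⟩ = (μ : ℂ) ∧
      (Gmat μ n * A0phibar μ) ⟨n, by omega⟩ ⟨μ - 1, by omega⟩ = 0 ∧
      (A0phibar μ)ᵀ * Gmat μ n ≠ Gmat μ n * A0phibar μ) ∧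
    (μ = n + 1 →
      A0phibar μ = A0lim μ s ∧
      (A0phibar μ)ᵀ * Gmat μ n = Gmat μ n * A0phibar μ) := by
  refine ⟨fun h => ⟨A0phibar_transpose_mul_Gmat_apply_last h, Gmat_mul_A0phibar_apply_last h,
    fun heq => ?_⟩, fun hμn => ?_⟩
  · have hentry := congrFun (congrFun heq ⟨n, by omega⟩) ⟨μ - 1, by omega⟩
    rw [A0phibar_transpose_mul_Gmat_apply_last h, Gmat_mul_A0phibar_apply_last h] at hentry
    exact Nat.cast_ne_zero.2 (by omega) hentry
  · have hw := weights_eq_one hw0 hwpos (hμn ▸ hμ)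
    have hs : ∀ k, k < μ → s k = 0 := fun k hk =>
      eq_zero_of_mem_bind_of_weights_eq_one hw
        (hmult ▸ Multiset.mem_map_of_mem s (Multiset.mem_range.2 hk))
    subst hμn
    exact ⟨(A0lim_eq_A0phibar fun k hk => by rw [hs _ hk, hs _ (by omega)]).symm,
      A0phibar_transpose_mul_Gmat_succ n⟩
end
end

section
/- Let e_0 be the first standard basis vector of ℂ^μ. Then: (1) e_0 is an eigenvector of A_∞ (with eigenvalue 0); (2) the family (e_0, [A_0]e_0, …, [A_0]^{μ−1}e_0) is a basis of ℂ^μ if and only if μ = n+1; and (3) if μ ≥ n+2, then for every vector v ∈ ℂ^μ the family (v, [A_0]v, …, [A_0]^{μ−1}v) is not a basis of ℂ^μ (the matrix [A_0] has no cyclic vector, because it has at least two Jordan blocks for the eigenvalue 0). -/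
/-!
The values `s_k` are nonnegative and nondecreasing, and each `i ≤ n` contributes exactly one zero
(`ℓ = 0`), so `s_k = 0` iff `k ≤ n`. Hence `α_0 = 0`, and `[A_0]` acts as `μ` times the lower
shift on `e_0, …, e_n` but has a zero entry between `e_n` and `e_{n+1}`. If `μ = n + 1`, the
vectors `[A_0]^k e_0 = μ^k e_k` form a basis; if `μ ≥ n + 2`, that break leaves every Jordan block
shorter than `μ`, so `[A_0]^{μ-1} = 0` and the last vector of every family `([A_0]^k v)_k` is `0`.
-/

open Finset Matrix

noncomputable section

/-- The first standard basis vector `e_0` of `ℂ^μ`. -/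
def e0vec (μ : ℕ) : Fin μ → ℂ := fun j => if (j : ℕ) = 0 then 1 else 0

lemma Finset.eq_range_card_of_isLowerSet {Z : Finset ℕ} (hZ : IsLowerSet (Z : Set ℕ)) :
    Z = range #Z := by
  rcases hZ.eq_univ_or_Iio with hZ_univ | ⟨a, hZ_Iio⟩
  · exact absurd (hZ_univ ▸ Z.finite_toSet) Set.infinite_univ
  · obtain rfl : Z = range a := by rw [← coe_inj, hZ_Iio, coe_range]
    rw [card_range]

section WeightedMultiset

variable {I : Finset ℕ} {w : ℕ → ℕ} {c : ℚ}

lemma count_zero_bind_range_map (hw : ∀ i ∈ I, 1 ≤ w i) (hc : c ≠ 0) :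
    Multiset.count 0 (I.val.bind fun i => (Multiset.range (w i)).map fun ℓ => (ℓ : ℚ) * c / w i) =
      #I := by
  rw [Multiset.count_bind, ← Finset.sum_eq_multiset_sum, Finset.card_eq_sum_ones]
  refine Finset.sum_congr rfl fun i hi => ?_
  -- `(ℓ : ℚ)` makes the bound variable rational, so `Multiset.range (w i)` is cast by a monadic lift.
  simp only [bind_pure_comp, Multiset.fmap_def, Multiset.map_map, Function.comp_def]
  have hwi : (w i : ℚ) ≠ 0 := by have := hw i hi; positivity
  have hinj : Function.Injective fun ℓ : ℕ => (ℓ : ℚ) * c / w i := fun a b hab => by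
    simpa [hc, hwi] using hab
  have := Multiset.count_map_eq_count' _ (Multiset.range (w i)) hinj 0
  simp only [Nat.cast_zero, zero_mul, zero_div] at this
  rw [this, Multiset.count_eq_one_of_mem (Multiset.nodup_range _)
    (Multiset.mem_range.2 (hw i hi))]

lemma nonneg_of_mem_bind_range_map (hc : 0 ≤ c) {x : ℚ}
    (hx : x ∈ I.val.bind fun i => (Multiset.range (w i)).map fun ℓ => (ℓ : ℚ) * c / w i) :
    0 ≤ x := by
  obtain ⟨i, -, hi⟩ := Multiset.mem_bind.1 hx
  simp only [bind_pure_comp, Multiset.fmap_def, Multiset.map_map] at hi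
  obtain ⟨ℓ, -, rfl⟩ := Multiset.mem_map.1 hi
  simp only [Function.comp_apply]
  positivity

end WeightedMultiset

lemma filter_range_eq_zero_eq_range_s12 {n μ : ℕ} {w : ℕ → ℕ} {s : ℕ → ℚ}
    (hw : ∀ i ∈ range (n + 1), 1 ≤ w i) (hμ : μ ≠ 0)
    (hmono : ∀ k, k + 1 < μ → s k ≤ s (k + 1))
    (hmult : (Multiset.range μ).map s =
      (Finset.range (n + 1)).val.bind fun i =>
        (Multiset.range (w i)).map fun ℓ => (ℓ : ℚ) * μ / (w i)) :
    (range μ).filter (fun k => s k = 0) = range (n + 1) := by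
  have hnonneg : ∀ k < μ, 0 ≤ s k := fun k hk =>
    nonneg_of_mem_bind_range_map (Nat.cast_nonneg μ)
      (hmult ▸ Multiset.mem_map_of_mem s (Multiset.mem_range.2 hk))
  have hmonoOn : MonotoneOn s (Set.Iio μ) :=
    monotoneOn_of_le_succ Set.ordConnected_Iio fun k _ _ hk => hmono k hk
  have hcard : #((range μ).filter fun k => s k = 0) = n + 1 := by
    have := congrArg (Multiset.count 0) hmult
    rwa [count_zero_bind_range_map hw (Nat.cast_ne_zero.2 hμ), card_range, Multiset.count_map,
      Multiset.filter_congr fun _ _ => eq_comm] at this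
  refine (Finset.eq_range_card_of_isLowerSet fun k j hjk hk => ?_).trans (by rw [hcard])
  simp only [coe_filter, mem_range, Set.mem_ofPred_eq] at hk ⊢
  exact ⟨by omega, le_antisymm (hk.2 ▸ hmonoOn (Set.mem_Iio.2 (by omega)) (Set.mem_Iio.2 hk.1) hjk)
    (hnonneg j (by omega))⟩

section A0lim

variable {μ : ℕ} {s : ℕ → ℚ}

lemma A0lim_apply_ne_zero {i j : Fin μ} (h : A0lim μ s i j ≠ 0) :
    (i : ℕ) = j + 1 ∧ s (j + 1) = s j := by
  by_contra hij
  simp [A0lim, hij] at h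

lemma A0lim_pow_apply_ne_zero {m : ℕ} {i j : Fin μ} (h : (A0lim μ s ^ m) i j ≠ 0) :
    (i : ℕ) = j + m ∧ ∀ t : ℕ, j ≤ t → t < i → s (t + 1) = s t := by
  induction m generalizing i with
  | zero =>
    obtain rfl : i = j := by by_contra hij; simp [one_apply_ne hij] at h
    exact ⟨rfl, fun t h₁ h₂ => absurd h₂ (by omega)⟩
  | succ m ih =>
    rw [pow_succ', mul_apply] at h
    obtain ⟨k, -, hk⟩ := Finset.exists_ne_zero_of_sum_ne_zero h
    obtain ⟨hik, hsk⟩ := A0lim_apply_ne_zero (left_ne_zero_of_mul hk)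
    obtain ⟨hkj, hconst⟩ := ih (right_ne_zero_of_mul hk)
    refine ⟨by omega, fun t h₁ h₂ => ?_⟩
    rcases (by omega : t < k ∨ t = k) with ht | rfl
    · exact hconst t h₁ ht
    · exact hsk

/-- A break `s (t + 1) ≠ s t` splits `[A_0]` into nilpotent Jordan blocks of size `< μ`. -/
lemma A0lim_pow_eq_zero {t : ℕ} (ht : t + 1 < μ) (hs : s (t + 1) ≠ s t) :
    A0lim μ s ^ (μ - 1) = 0 := by
  ext i j
  by_contra h
  obtain ⟨hij, hconst⟩ := A0lim_pow_apply_ne_zero h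
  exact hs (hconst t (by omega) (by omega))

lemma A0lim_mulVec_single {j : ℕ} (hj : j + 1 < μ) (hs : s (j + 1) = s j) (x : ℂ) :
    A0lim μ s *ᵥ Pi.single ⟨j, by omega⟩ x = Pi.single ⟨j + 1, hj⟩ (μ * x) := by
  ext i
  by_cases hi : (i : ℕ) = j + 1
  · obtain rfl : i = ⟨j + 1, hj⟩ := Fin.ext hi
    simp [A0lim, hs]
  · simp [A0lim, hi, Fin.ext_iff]

lemma e0vec_eq_single (hμ : 0 < μ) : e0vec μ = Pi.single ⟨0, hμ⟩ 1 := by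
  ext i
  simp [e0vec, Pi.single_apply, Fin.ext_iff]

lemma A0lim_pow_mulVec_e0vec (hconst : ∀ k, k + 1 < μ → s (k + 1) = s k) {m : ℕ} (hm : m < μ) :
    (A0lim μ s ^ m) *ᵥ e0vec μ = Pi.single ⟨m, hm⟩ ((μ : ℂ) ^ m) := by
  induction m with
  | zero => rw [pow_zero, pow_zero, one_mulVec, e0vec_eq_single hm]
  | succ m ih =>
    rw [pow_succ', ← mulVec_mulVec, ih (by omega), A0lim_mulVec_single hm (hconst m hm), pow_succ']

lemma exists_basis_A0lim_pow_mulVec_e0vec (hconst : ∀ k, k + 1 < μ → s (k + 1) = s k) :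
    ∃ B : Module.Basis (Fin μ) ℂ (Fin μ → ℂ),
      ⇑B = fun k : Fin μ => (A0lim μ s ^ (k : ℕ)) *ᵥ e0vec μ := by
  refine ⟨(Pi.basisFun ℂ (Fin μ)).unitsSMul fun k =>
    Units.mk0 ((μ : ℂ) ^ (k : ℕ)) (pow_ne_zero _ (Nat.cast_ne_zero.2 k.pos.ne')), ?_⟩
  ext1 k
  rw [Module.Basis.unitsSMul_apply, Pi.basisFun_apply, A0lim_pow_mulVec_e0vec hconst k.isLt,
    Units.smul_mk0]
  ext i
  simp [Pi.single_apply, Fin.ext_iff]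

lemma Ainf_mulVec_e0vec (hs : s 0 = 0) : Ainf μ s *ᵥ e0vec μ = 0 := by
  ext i
  by_cases hi : (i : ℕ) = 0 <;> simp [Ainf, e0vec, mulVec_diagonal, hi, hs]

end A0lim

lemma Matrix.not_linearIndependent_pow_mulVec {R ι : Type*} [CommRing R] [Nontrivial R]
    [Fintype ι] [DecidableEq ι] {A : Matrix ι ι R} {m : ℕ} (hA : A ^ m = 0) (v : ι → R)
    {k : ι → ℕ} {i : ι} (hi : k i = m) :
    ¬LinearIndependent R fun j => (A ^ k j) *ᵥ v :=
  fun h => h.ne_zero i (by simp [hi, hA])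

theorem stmt_12_general (n : ℕ) (w : ℕ → ℕ) (hw0 : w 0 = 1)
    (hwpos : ∀ i ∈ Finset.Icc 1 n, 1 ≤ w i)
    (μ : ℕ) (hμ : μ = 1 + ∑ i ∈ Finset.Icc 1 n, w i)
    (s : ℕ → ℚ) (hmono : ∀ k, k + 1 < μ → s k ≤ s (k + 1))
    (hmult : (Multiset.range μ).map s =
      (Finset.range (n + 1)).val.bind fun i =>
        (Multiset.range (w i)).map fun ℓ => (ℓ : ℚ) * μ / (w i)) :
    (Ainf μ s).mulVec (e0vec μ) = (0 : ℂ) • e0vec μ ∧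
    ((LinearIndependent ℂ (fun k : Fin μ => (A0lim μ s ^ (k : ℕ)).mulVec (e0vec μ)) ∧
      Submodule.span ℂ
        (Set.range fun k : Fin μ => (A0lim μ s ^ (k : ℕ)).mulVec (e0vec μ)) = ⊤)
      ↔ μ = n + 1) ∧
    (n + 2 ≤ μ → ∀ v : Fin μ → ℂ,
      ¬(LinearIndependent ℂ (fun k : Fin μ => (A0lim μ s ^ (k : ℕ)).mulVec v) ∧
        Submodule.span ℂ
          (Set.range fun k : Fin μ => (A0lim μ s ^ (k : ℕ)).mulVec v) = ⊤)) := by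
  have hw : ∀ i ∈ range (n + 1), 1 ≤ w i := fun i hi => by
    rcases Nat.eq_zero_or_pos i with rfl | hi₀
    · exact hw0.ge
    · exact hwpos i (mem_Icc.2 ⟨hi₀, Nat.lt_succ_iff.1 (mem_range.1 hi)⟩)
  have hzeros := filter_range_eq_zero_eq_range_s12 hw (by omega) hmono hmult
  have hnμ : n + 1 ≤ μ := by
    have := card_le_card (hzeros ▸ filter_subset _ (range μ))
    rwa [card_range, card_range] at this
  have hs : ∀ k < μ, s k = 0 ↔ k ≤ n := fun k hk => by
    simpa [hk, Nat.lt_succ_iff] using congrArg (k ∈ ·) hzeros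
  have hno_cyclic : n + 2 ≤ μ → ∀ v : Fin μ → ℂ,
      ¬(LinearIndependent ℂ (fun k : Fin μ => (A0lim μ s ^ (k : ℕ)).mulVec v) ∧
        Submodule.span ℂ (Set.range fun k : Fin μ => (A0lim μ s ^ (k : ℕ)).mulVec v) = ⊤) :=
    fun hμn v hv => not_linearIndependent_pow_mulVec
      (A0lim_pow_eq_zero (t := n) (by omega) (by
        rw [(hs n (by omega)).2 le_rfl]
        exact mt (hs (n + 1) (by omega)).1 (by omega)))
      v (i := ⟨μ - 1, by omega⟩) rfl hv.1
  refine ⟨by rw [zero_smul, Ainf_mulVec_e0vec ((hs 0 (by omega)).2 (Nat.zero_le n))],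
    ⟨fun hbasis => ?_, fun hμn => ?_⟩, hno_cyclic⟩
  · by_contra hne
    exact hno_cyclic (by omega) _ hbasis
  · obtain ⟨B, hB⟩ := exists_basis_A0lim_pow_mulVec_e0vec (s := s) fun k hk => by
      rw [(hs _ hk).2 (by omega), (hs k (by omega)).2 (by omega)]
    rw [← hB]
    exact ⟨B.linearIndependent, B.span_eq⟩

/-- `e_0` is an eigenvector of `A_∞` with eigenvalue `0`; the family
`(e_0, [A_0]e_0, …, [A_0]^{μ−1}e_0)` is a basis of `ℂ^μ` iff `μ = n+1`; and if
`μ ≥ n+2` then no vector `v` yields a basis `(v, [A_0]v, …, [A_0]^{μ−1}v)`. -/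
theorem stmt_12 (n : ℕ) (hn : 1 ≤ n) (w : ℕ → ℕ) (hw0 : w 0 = 1)
    (hwpos : ∀ i ∈ Finset.Icc 1 n, 1 ≤ w i)
    (μ : ℕ) (hμ : μ = 1 + ∑ i ∈ Finset.Icc 1 n, w i)
    (s : ℕ → ℚ) (hmono : ∀ k, k + 1 < μ → s k ≤ s (k + 1))
    (hmult : (Multiset.range μ).map s =
      (Finset.range (n + 1)).val.bind fun i =>
        (Multiset.range (w i)).map fun ℓ => (ℓ : ℚ) * μ / (w i)) :
    (Ainf μ s).mulVec (e0vec μ) = (0 : ℂ) • e0vec μ ∧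
    ((LinearIndependent ℂ (fun k : Fin μ => (A0lim μ s ^ (k : ℕ)).mulVec (e0vec μ)) ∧
      Submodule.span ℂ
        (Set.range fun k : Fin μ => (A0lim μ s ^ (k : ℕ)).mulVec (e0vec μ)) = ⊤)
      ↔ μ = n + 1) ∧
    (n + 2 ≤ μ → ∀ v : Fin μ → ℂ,
      ¬(LinearIndependent ℂ (fun k : Fin μ => (A0lim μ s ^ (k : ℕ)).mulVec v) ∧
        Submodule.span ℂ
          (Set.range fun k : Fin μ => (A0lim μ s ^ (k : ℕ)).mulVec v) = ⊤)) :=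
  stmt_12_general n w hw0 hwpos μ hμ s hmono hmult
end
end
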